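/- arXiv:1112.2893 — 13 statements merged into one kernel-verified Lean document; each statement's English description precedes it below -/
import Mathlib

section
/- Let f : ℝ → ℝ be n-times differentiable. Then for every real x, the n-th derivative of the composite function x ↦ f(x²) satisfies dⁿ/dxⁿ [f(x²)] = n! · Σ_{k=0}^{⌊n/2⌋} (2x)^{n−2k} / (k! (n−2k)!) · f^{(n−k)}(x²), where f^{(m)} denotes the m-th derivative of f. -/
/-!
Differentiating one term gives
`d/dx [(2x)^m g(x²)] = 2m (2x)^(m-1) g(x²) + (2x)^(m+1) g'(x²)`,
so if `D^n [f(x²)] = ∑ c(n,k) (2x)^(n-2k) f^(n-k)(x²)`, the coefficients obey the Pascal-type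
recursion `c(n+1,k+1) = 2(n-2k) c(n,k) + c(n,k+1)` with `c(n,0) = 1`, whose solution is
`c(n,k) = n! / (k! (n-2k)!)` for `2k ≤ n` and `0` otherwise.
-/

open Finset
open scoped Nat

noncomputable def sqCompCoeff (n k : ℕ) : ℝ :=
  if 2 * k ≤ n then (n ! : ℝ) / (k ! * (n - 2 * k)!) else 0

lemma sqCompCoeff_zero_right (n : ℕ) : sqCompCoeff n 0 = 1 := by
  simp [sqCompCoeff, Nat.factorial_ne_zero]

lemma sqCompCoeff_of_lt {n k : ℕ} (h : n < 2 * k) : sqCompCoeff n k = 0 := by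
  simp [sqCompCoeff, h]

lemma sqCompCoeff_of_le {n k : ℕ} (h : 2 * k ≤ n) :
    sqCompCoeff n k = (n ! : ℝ) / (k ! * (n - 2 * k)!) := by
  simp [sqCompCoeff, h]

lemma sqCompCoeff_succ_succ (n k : ℕ) :
    sqCompCoeff (n + 1) (k + 1) =
      2 * (n - 2 * k : ℕ) * sqCompCoeff n k + sqCompCoeff n (k + 1) := by
  rcases lt_trichotomy n (2 * k + 1) with h | rfl | h
  · rw [sqCompCoeff_of_lt (n := n + 1) (by omega),
      sqCompCoeff_of_lt (n := n) (k := k + 1) (by omega), Nat.sub_eq_zero_of_le (by omega)]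
    simp
  · rw [sqCompCoeff_of_le (by omega), sqCompCoeff_of_le (by omega), sqCompCoeff_of_lt (by omega),
      show 2 * k + 1 + 1 - 2 * (k + 1) = 0 by omega, show 2 * k + 1 - 2 * k = 1 by omega]
    push_cast [Nat.factorial_succ]
    field_simp
    ring
  · obtain ⟨m, rfl⟩ : ∃ m, n = m + 2 * k + 2 := ⟨n - (2 * k + 2), by omega⟩
    rw [sqCompCoeff_of_le (by omega), sqCompCoeff_of_le (by omega), sqCompCoeff_of_le (by omega),
      show m + 2 * k + 2 + 1 - 2 * (k + 1) = m + 1 by omega,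
      show m + 2 * k + 2 - 2 * k = m + 2 by omega, show m + 2 * k + 2 - 2 * (k + 1) = m by omega]
    push_cast [Nat.factorial_succ]
    field_simp
    ring

lemma sqCompCoeff_mul_pow_succ_succ (n k : ℕ) (a : ℕ → ℝ) (y : ℝ) :
    sqCompCoeff (n + 1) (k + 1) * (2 * y) ^ (n + 1 - 2 * (k + 1)) * a (n + 1 - (k + 1)) =
      sqCompCoeff n k * (2 * (n - 2 * k : ℕ) * (2 * y) ^ (n - 2 * k - 1) * a (n - k)) +
        sqCompCoeff n (k + 1) * ((2 * y) ^ (n - 2 * (k + 1) + 1) * a (n - (k + 1) + 1)) := by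
  rw [sqCompCoeff_succ_succ, show n + 1 - 2 * (k + 1) = n - 2 * k - 1 by omega,
    show n + 1 - (k + 1) = n - k by omega]
  rcases le_or_gt (2 * (k + 1)) n with h | h
  · rw [show n - 2 * (k + 1) + 1 = n - 2 * k - 1 by omega, show n - (k + 1) + 1 = n - k by omega]
    ring
  · rw [sqCompCoeff_of_lt h]
    ring

lemma sum_sqCompCoeff_mul_deriv (n : ℕ) (a : ℕ → ℝ) (y : ℝ) :
    ∑ k ∈ range (n + 1), sqCompCoeff n k *
        (2 * (n - 2 * k : ℕ) * (2 * y) ^ (n - 2 * k - 1) * a (n - k) +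
          (2 * y) ^ (n - 2 * k + 1) * a (n - k + 1)) =
      ∑ k ∈ range (n + 2),
        sqCompCoeff (n + 1) k * (2 * y) ^ (n + 1 - 2 * k) * a (n + 1 - k) := by
  set b : ℕ → ℝ := fun k => sqCompCoeff n k * ((2 * y) ^ (n - 2 * k + 1) * a (n - k + 1))
  have hshift : ∑ k ∈ range (n + 1), b k = ∑ k ∈ range (n + 1), b (k + 1) + b 0 := by
    have hb : b (n + 1) = 0 := by simp [b, sqCompCoeff_of_lt (by omega : n < 2 * (n + 1))]
    rw [← sum_range_succ', sum_range_succ _ (n + 1), hb, add_zero]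
  simp_rw [mul_add, sum_add_distrib]
  rw [hshift, sum_range_succ' _ (n + 1)]
  simp_rw [b, sqCompCoeff_mul_pow_succ_succ, sum_add_distrib, sqCompCoeff_zero_right]
  simp only [mul_zero, Nat.sub_zero]
  ring

lemma HasDerivAt.two_mul_pow_mul_comp_sq {g : ℝ → ℝ} {g' x : ℝ}
    (hg : HasDerivAt g g' (x ^ 2)) (m : ℕ) :
    HasDerivAt (fun y => (2 * y) ^ m * g (y ^ 2))
      (2 * m * (2 * x) ^ (m - 1) * g (x ^ 2) + (2 * x) ^ (m + 1) * g') x := by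
  have hpow : HasDerivAt (fun y : ℝ => (2 * y) ^ m) (m * (2 * x) ^ (m - 1) * 2) x :=
    ((hasDerivAt_id x).const_mul 2).fun_pow m |>.congr_deriv (by simp)
  have hcomp : HasDerivAt (fun y => g (y ^ 2)) (g' * (2 * x)) x :=
    hg.comp (h := fun y => y ^ 2) x (by simpa using hasDerivAt_pow 2 x)
  exact (hpow.fun_mul hcomp).congr_deriv (by ring)

lemma iteratedDeriv_comp_sq_eq_sum {n : ℕ} {f : ℝ → ℝ} (hf : ContDiff ℝ n f) (x : ℝ) :
    iteratedDeriv n (fun t => f (t ^ 2)) x =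
      ∑ k ∈ range (n + 1),
        sqCompCoeff n k * (2 * x) ^ (n - 2 * k) * iteratedDeriv (n - k) f (x ^ 2) := by
  induction n generalizing x with
  | zero => simp [sqCompCoeff_zero_right]
  | succ n ih =>
    have hterm (k : ℕ) (_ : k ∈ range (n + 1)) : HasDerivAt
        (fun y => sqCompCoeff n k * (2 * y) ^ (n - 2 * k) * iteratedDeriv (n - k) f (y ^ 2))
        (sqCompCoeff n k * (2 * (n - 2 * k : ℕ) * (2 * x) ^ (n - 2 * k - 1) *
          iteratedDeriv (n - k) f (x ^ 2) + (2 * x) ^ (n - 2 * k + 1) *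
            iteratedDeriv (n - k + 1) f (x ^ 2))) x := by
      have hdiff : Differentiable ℝ (iteratedDeriv (n - k) f) :=
        hf.differentiable_iteratedDeriv _ (by norm_cast; omega)
      rw [iteratedDeriv_succ]
      simpa only [mul_assoc] using ((hdiff _).hasDerivAt.two_mul_pow_mul_comp_sq _).const_mul _
    rw [iteratedDeriv_succ, funext (ih (hf.of_le (by norm_cast; omega))),
      (HasDerivAt.fun_sum hterm).deriv]
    exact sum_sqCompCoeff_mul_deriv n (fun j => iteratedDeriv j f (x ^ 2)) x

theorem iteratedDeriv_comp_sq (n : ℕ) (f : ℝ → ℝ) (hf : ContDiff ℝ n f) (x : ℝ) :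
    iteratedDeriv n (fun t => f (t ^ 2)) x =
      (n.factorial : ℝ) * ∑ k ∈ Finset.range (n / 2 + 1),
        (2 * x) ^ (n - 2 * k) / ((k.factorial : ℝ) * (n - 2 * k).factorial) *
          iteratedDeriv (n - k) f (x ^ 2) := by
  rw [iteratedDeriv_comp_sq_eq_sum hf, mul_sum,
    ← sum_subset (range_subset_range.mpr (by omega : n / 2 + 1 ≤ n + 1))]
  · refine sum_congr rfl fun k hk => ?_
    rw [sqCompCoeff_of_le (by rw [mem_range] at hk; omega)]
    ring
  · intro k _ hk
    rw [sqCompCoeff_of_lt (by rw [mem_range] at hk; omega), zero_mul, zero_mul]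
end

section
/- For all real numbers a and x and every natural number n, dⁿ/dxⁿ e^{a x²} = H_n^{(2)}(2ax, a) · e^{a x²}, where H_n^{(2)} is the two-variable Hermite–Kampé de Fériet polynomial. -/
open Finset

/-- The two-variable Hermite–Kampé de Fériet polynomials. -/
noncomputable def hermiteKdF2 (n : ℕ) (x y : ℝ) : ℝ :=
  (n.factorial : ℝ) * ∑ k ∈ Finset.range (n / 2 + 1),
    x ^ (n - 2 * k) * y ^ k / ((n - 2 * k).factorial * k.factorial)

/-!
Differentiating `p(t) e^{a t²}` gives `(p'(t) + 2 a t p(t)) e^{a t²}`, so by induction it suffices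
that `H_{n+1}(x, y) = x H_n(x, y) + 2 y ∂ₓ H_n(x, y)`. This follows from the Appell property
`∂ₓ H_{n+1} = (n + 1) H_n` and the recurrence `H_{n+2} = x H_{n+1} + 2 (n + 1) y H_n`, both of
which hold term by term once `H_n / n!` is written as `∑_{j + 2k = n} (x^j / j!) (y^k / k!)`.
-/

open Nat

-- Extending by zero past `k = n / 2` lets sums for different `n` run over a common range.
noncomputable def hermiteKdF2Term (n k : ℕ) (x y : ℝ) : ℝ :=
  if 2 * k ≤ n then x ^ (n - 2 * k) / (n - 2 * k)! * (y ^ k / k !) else 0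

theorem hermiteKdF2_eq_sum_term {n N : ℕ} (hN : n / 2 < N) (x y : ℝ) :
    hermiteKdF2 n x y = n ! * ∑ k ∈ range N, hermiteKdF2Term n k x y := by
  unfold hermiteKdF2
  congr 1
  refine Finset.sum_subset_zero_on_sdiff (range_subset_range.2 (by omega)) ?_ ?_
  · intro k hk
    simp only [mem_sdiff, mem_range] at hk
    exact if_neg (by omega)
  · intro k hk
    rw [hermiteKdF2Term, if_pos (by simp at hk; omega)]
    ring

theorem hasDerivAt_hermiteKdF2Term_succ (n k : ℕ) (x y : ℝ) :
    HasDerivAt (fun x => hermiteKdF2Term (n + 1) k x y) (hermiteKdF2Term n k x y) x := by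
  by_cases hk : 2 * k ≤ n
  · simp only [hermiteKdF2Term, if_pos hk, if_pos (show 2 * k ≤ n + 1 by omega),
      show n + 1 - 2 * k = n - 2 * k + 1 by omega]
    refine (((hasDerivAt_pow (n - 2 * k + 1) x).div_const _).mul_const _).congr_deriv ?_
    rw [factorial_succ]
    push_cast
    field_simp
  · have hconst :
        (fun x => hermiteKdF2Term (n + 1) k x y) = fun _ => hermiteKdF2Term (n + 1) k 0 y := by
      funext x
      unfold hermiteKdF2Term
      split_ifs
      · simp [show n + 1 - 2 * k = 0 by omega]
      · rfl
    rw [hconst, show hermiteKdF2Term n k x y = 0 from if_neg hk]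
    exact hasDerivAt_const x _

theorem hermiteKdF2Term_zero_succ (n : ℕ) (x y : ℝ) :
    ((n + 1 : ℕ) : ℝ) * hermiteKdF2Term (n + 1) 0 x y = x * hermiteKdF2Term n 0 x y := by
  simp only [hermiteKdF2Term, mul_zero, zero_le, if_true, Nat.sub_zero, factorial_succ n]
  push_cast
  field_simp
  ring

theorem hermiteKdF2Term_succ_succ (n k : ℕ) (x y : ℝ) :
    ((n + 2 : ℕ) : ℝ) * hermiteKdF2Term (n + 2) (k + 1) x y =
      x * hermiteKdF2Term (n + 1) (k + 1) x y + 2 * y * hermiteKdF2Term n k x y := by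
  unfold hermiteKdF2Term
  by_cases hk : 2 * k ≤ n
  · obtain ⟨j, rfl⟩ := Nat.exists_eq_add_of_le hk
    rw [if_pos (by omega), if_pos hk, show 2 * k + j + 2 - 2 * (k + 1) = j by omega,
      show 2 * k + j - 2 * k = j by omega]
    rcases j with _ | i
    · rw [if_neg (by omega), factorial_succ k]
      push_cast
      field_simp
      ring
    · rw [if_pos (by omega), show 2 * k + (i + 1) + 1 - 2 * (k + 1) = i by omega,
        factorial_succ k, factorial_succ i]
      push_cast
      field_simp
      ring
  · rw [if_neg (by omega), if_neg (by omega), if_neg hk]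
    ring

theorem hermiteKdF2_zero (x y : ℝ) : hermiteKdF2 0 x y = 1 := by
  simp [hermiteKdF2]

theorem hermiteKdF2_one (x y : ℝ) : hermiteKdF2 1 x y = x := by
  simp [hermiteKdF2]

theorem hasDerivAt_hermiteKdF2_succ (n : ℕ) (x y : ℝ) :
    HasDerivAt (fun x => hermiteKdF2 (n + 1) x y) ((n + 1) * hermiteKdF2 n x y) x := by
  have hsum := HasDerivAt.fun_sum (u := range (n + 1)) fun k _ =>
    hasDerivAt_hermiteKdF2Term_succ n k x y
  rw [funext fun x => hermiteKdF2_eq_sum_term (N := n + 1) (by omega) x y,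
    hermiteKdF2_eq_sum_term (N := n + 1) (by omega)]
  refine (hsum.const_mul _).congr_deriv ?_
  rw [factorial_succ]
  push_cast
  ring

theorem hermiteKdF2_succ_succ (n : ℕ) (x y : ℝ) :
    hermiteKdF2 (n + 2) x y =
      x * hermiteKdF2 (n + 1) x y + 2 * (n + 1) * y * hermiteKdF2 n x y := by
  have hterms : ((n + 2 : ℕ) : ℝ) * ∑ k ∈ range (n + 2), hermiteKdF2Term (n + 2) k x y =
      x * ∑ k ∈ range (n + 2), hermiteKdF2Term (n + 1) k x y +
        2 * y * ∑ k ∈ range (n + 1), hermiteKdF2Term n k x y := by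
    rw [sum_range_succ', sum_range_succ' _ (n + 1), mul_add, mul_sum, hermiteKdF2Term_zero_succ]
    simp only [hermiteKdF2Term_succ_succ, sum_add_distrib, mul_add, mul_sum]
    ring
  rw [hermiteKdF2_eq_sum_term (N := n + 2) (by omega),
    hermiteKdF2_eq_sum_term (N := n + 2) (by omega),
    hermiteKdF2_eq_sum_term (N := n + 1) (by omega), factorial_succ (n + 1), factorial_succ n]
  push_cast at hterms ⊢
  linear_combination ((n + 1) * n ! : ℝ) * hterms

theorem hasDerivAt_hermiteKdF2_mul_exp (a t : ℝ) (n : ℕ) :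
    HasDerivAt (fun t => hermiteKdF2 n (2 * a * t) a * Real.exp (a * t ^ 2))
      (hermiteKdF2 (n + 1) (2 * a * t) a * Real.exp (a * t ^ 2)) t := by
  have hexp :
      HasDerivAt (fun t => Real.exp (a * t ^ 2)) (Real.exp (a * t ^ 2) * (a * (2 * t))) t := by
    simpa using ((hasDerivAt_pow 2 t).const_mul a).exp
  cases n with
  | zero =>
    simp only [hermiteKdF2_zero, zero_add, hermiteKdF2_one, one_mul]
    exact hexp.congr_deriv (by ring)
  | succ m =>
    have hH := (hasDerivAt_hermiteKdF2_succ m (2 * a * t) a).comp t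
      ((hasDerivAt_id t).const_mul (2 * a))
    refine (hH.mul hexp).congr_deriv ?_
    rw [hermiteKdF2_succ_succ]
    simp only [Function.comp_apply, mul_one]
    ring

theorem iteratedDeriv_exp_sq (a x : ℝ) (n : ℕ) :
    iteratedDeriv n (fun t => Real.exp (a * t ^ 2)) x =
      hermiteKdF2 n (2 * a * x) a * Real.exp (a * x ^ 2) := by
  induction n generalizing x with
  | zero => simp [hermiteKdF2_zero]
  | succ n ih =>
    rw [iteratedDeriv_succ, funext ih]
    exact (hasDerivAt_hermiteKdF2_mul_exp a x n).deriv
end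

section
/- Let f : ℝ → ℝ be n-times differentiable and let a, b be real numbers. Then for every real x, dⁿ/dxⁿ [f(a x² + b x)] = n! · Σ_{k=0}^{⌊n/2⌋} (2ax + b)^{n−2k} a^k / ((n−2k)! k!) · f^{(n−k)}(a x² + b x). -/
/-!
With `V = u' = 2ax + b` and `u'' = 2a`, differentiating `V ^ m * a ^ k * f⁽ʲ⁾ (u x)` gives one term
with `V ^ (m - 1) * a ^ (k + 1)` (from `V' = 2a`) and one with `V ^ (m + 1)` and `f⁽ʲ⁺¹⁾`
(chain rule). Writing `n! / (n - 2k)!` as the descending factorial `n.descFactorial (2k)`, the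
coefficients of the `(n+1)`-st derivative then follow from the Pascal rule
`(n+1).descFactorial (j+1) = n.descFactorial (j+1) + (j+1) * n.descFactorial j`.
-/

open Finset
open scoped Nat

theorem Nat.succ_descFactorial_succ_eq_add (n j : ℕ) :
    (n + 1).descFactorial (j + 1) = n.descFactorial (j + 1) + (j + 1) * n.descFactorial j := by
  simp only [descFactorial_eq_factorial_mul_choose, choose_succ_succ, factorial_succ]
  ring

theorem Finset.sum_range_add_two_eq_of_eq_add {M : Type*} [AddCommMonoid M] {T A B : ℕ → M}
    {n : ℕ} (h0 : T 0 = B 0) (hsucc : ∀ k, T (k + 1) = A k + B (k + 1)) (hB : B (n + 1) = 0) :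
    ∑ k ∈ range (n + 2), T k = ∑ k ∈ range (n + 1), (A k + B k) := by
  rw [sum_range_succ', h0, sum_congr rfl fun k _ => hsucc k, sum_add_distrib, add_assoc,
    ← sum_range_succ' B, sum_range_succ B, hB, add_zero, sum_add_distrib]

theorem descFactorial_mul_pow_sub_mul (n j : ℕ) (V : ℝ) :
    (n.descFactorial j : ℝ) * (V ^ (n - j) * V) = n.descFactorial j * V ^ (n + 1 - j) := by
  rcases le_or_gt j n with h | h
  · rw [← pow_succ, Nat.sub_add_comm h]
  · simp [Nat.descFactorial_eq_zero_iff_lt.mpr h]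

/-- Here `V`, `a` and `F j` stand for `u' x`, `u'' / 2` and `f⁽ʲ⁾ (u x)`. The descending factorial
`n.descFactorial (2 * k) = n! / (n - 2k)!` vanishes for `2k > n`, so sums of these terms may run
over any range containing `k ≤ n / 2`. -/
noncomputable def quadCompTerm (V a : ℝ) (F : ℕ → ℝ) (n k : ℕ) : ℝ :=
  n.descFactorial (2 * k) / k ! * V ^ (n - 2 * k) * a ^ k * F (n - k)

theorem quadCompTerm_eq_zero {n k : ℕ} (h : n < 2 * k) (V a : ℝ) (F : ℕ → ℝ) :
    quadCompTerm V a F n k = 0 := by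
  simp [quadCompTerm, Nat.descFactorial_eq_zero_iff_lt.mpr h]

theorem sum_range_quadCompTerm_succ (V a : ℝ) (F : ℕ → ℝ) (n : ℕ) :
    ∑ k ∈ range (n + 2), quadCompTerm V a F (n + 1) k =
      ∑ k ∈ range (n + 1),
        (n.descFactorial (2 * k) / k ! *
            ((n - 2 * k : ℕ) * V ^ (n - 2 * k - 1) * (2 * a) * a ^ k * F (n - k)) +
          n.descFactorial (2 * k) / k ! * V ^ (n + 1 - 2 * k) * a ^ k * F (n + 1 - k)) := by
  refine sum_range_add_two_eq_of_eq_add (by simp [quadCompTerm]) (fun k => ?_)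
    (by simp [Nat.descFactorial_eq_zero_iff_lt.mpr (show n < 2 * (n + 1) by omega)])
  have hdesc : (n + 1).descFactorial (2 * (k + 1)) =
      n.descFactorial (2 * (k + 1)) + (2 * k + 2) * ((n - 2 * k) * n.descFactorial (2 * k)) := by
    rw [show 2 * (k + 1) = 2 * k + 1 + 1 by ring, Nat.succ_descFactorial_succ_eq_add,
      Nat.descFactorial_succ n (2 * k)]
  simp only [quadCompTerm, hdesc, Nat.factorial_succ, Nat.cast_add, Nat.cast_mul,
    show n + 1 - 2 * (k + 1) = n - 2 * k - 1 by omega, show n + 1 - (k + 1) = n - k by omega]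
  push_cast
  field_simp
  ring

section

variable {f u v : ℝ → ℝ} {a x : ℝ}

theorem hasDerivAt_quadCompTerm (hu : HasDerivAt u (v x) x) (hv : HasDerivAt v (2 * a) x)
    {G : ℕ → ℝ → ℝ} {n k : ℕ} (hG : HasDerivAt (G (n - k)) (G (n + 1 - k) (u x)) (u x)) :
    HasDerivAt (fun y => quadCompTerm (v y) a (fun j => G j (u y)) n k)
      (n.descFactorial (2 * k) / k ! *
          ((n - 2 * k : ℕ) * v x ^ (n - 2 * k - 1) * (2 * a) * a ^ k * G (n - k) (u x)) +
        n.descFactorial (2 * k) / k ! * v x ^ (n + 1 - 2 * k) * a ^ k * G (n + 1 - k) (u x)) x := by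
  have h := (((hv.pow (n - 2 * k)).const_mul (n.descFactorial (2 * k) / k ! : ℝ)).mul_const
    (a ^ k)).mul (hG.comp x hu)
  refine h.congr_deriv ?_
  simp only [Pi.pow_apply, Function.comp_apply]
  linear_combination (a ^ k * G (n + 1 - k) (u x) / k !) *
    descFactorial_mul_pow_sub_mul n (2 * k) (v x)

theorem iteratedDeriv_comp_eq_sum_quadCompTerm (hu : ∀ x, HasDerivAt u (v x) x)
    (hv : ∀ x, HasDerivAt v (2 * a) x) {n : ℕ} (hf : ContDiff ℝ n f) :
    iteratedDeriv n (f ∘ u) =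
      fun x => ∑ k ∈ range (n + 1), quadCompTerm (v x) a (fun j => iteratedDeriv j f (u x)) n k := by
  induction n with
  | zero => ext; simp [quadCompTerm]
  | succ n ih =>
    have hf' : ContDiff ℝ n f := hf.of_le (by exact_mod_cast n.le_succ)
    rw [iteratedDeriv_succ, ih hf']
    ext x
    refine ((HasDerivAt.fun_sum fun k _ => hasDerivAt_quadCompTerm (hu x) (hv x) ?_).deriv).trans
      (sum_range_quadCompTerm_succ (v x) a (fun j => iteratedDeriv j f (u x)) n).symm
    rw [show n + 1 - k = n - k + 1 by grind, iteratedDeriv_succ]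
    exact ((hf.differentiable_iteratedDeriv (n - k) (by norm_cast; omega)) _).hasDerivAt

end

theorem sum_range_quadCompTerm_eq (V a : ℝ) (F : ℕ → ℝ) (n : ℕ) :
    ∑ k ∈ range (n + 1), quadCompTerm V a F n k =
      n ! * ∑ k ∈ range (n / 2 + 1), V ^ (n - 2 * k) * a ^ k / ((n - 2 * k)! * k !) * F (n - k) := by
  rw [mul_sum, ← sum_subset (range_subset_range.mpr (show n / 2 + 1 ≤ n + 1 by omega))
    fun k _ hk => quadCompTerm_eq_zero (by grind) V a F]
  refine sum_congr rfl fun k hk => ?_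
  rw [quadCompTerm, ← Nat.factorial_mul_descFactorial (show 2 * k ≤ n by grind)]
  push_cast
  field_simp

theorem iteratedDeriv_comp_quadratic (n : ℕ) (f : ℝ → ℝ) (hf : ContDiff ℝ n f)
    (a b x : ℝ) :
    iteratedDeriv n (fun t => f (a * t ^ 2 + b * t)) x =
      (n.factorial : ℝ) * ∑ k ∈ Finset.range (n / 2 + 1),
        (2 * a * x + b) ^ (n - 2 * k) * a ^ k /
            (((n - 2 * k).factorial : ℝ) * k.factorial) *
          iteratedDeriv (n - k) f (a * x ^ 2 + b * x) := by
  have hu (y : ℝ) : HasDerivAt (fun t => a * t ^ 2 + b * t) (2 * a * y + b) y :=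
    (((hasDerivAt_pow 2 y).const_mul a).add ((hasDerivAt_id y).const_mul b)).congr_deriv
      (by norm_num; ring)
  have hv (y : ℝ) : HasDerivAt (fun t => 2 * a * t + b) (2 * a) y := by
    simpa using ((hasDerivAt_id y).const_mul (2 * a)).add_const b
  exact (congrFun (iteratedDeriv_comp_eq_sum_quadCompTerm hu hv hf) x).trans
    (sum_range_quadCompTerm_eq _ _ (fun j => iteratedDeriv j f (a * x ^ 2 + b * x)) n)
end

section
/- For all real numbers a and x and every natural number n, dⁿ/dxⁿ e^{a x³} = H_n^{(3)}(3a x², 3a x, a) · e^{a x³}, where H_n^{(3)} is the three-variable Hermite–Kampé de Fériet polynomial. -/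
open Finset

/-- The three-variable Hermite–Kampé de Fériet polynomials. -/
noncomputable def hermiteKdF3 (n : ℕ) (x y z : ℝ) : ℝ :=
  (n.factorial : ℝ) * ∑ k ∈ Finset.range (n / 3 + 1),
    z ^ k * hermiteKdF2 (n - 3 * k) x y / ((n - 3 * k).factorial * k.factorial)

/-! The `n`-th derivative of `e^{a t³}` at `x` is the `n`-th derivative at `0` of
`e^{a (t + x)³} = e^{a x³} e^{3 a x² t + 3 a x t² + a t³}`. The only nonzero derivatives at `0`
of `e^{c t^j}` are those of order `j k`, equal to `(j k)! c^k / k!` (read off from the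
exponential series), so the Leibniz rule applied to `e^{x t} e^{y t²}` and then to
`e^{x t + y t²} e^{z t³}` produces exactly the sums defining `H_n^{(2)}(x, y)` and
`H_n^{(3)}(x, y, z)`. -/

open Real Nat FormalMultilinearSeries

theorem HasFPowerSeriesOnBall.iteratedDeriv_eq_factorial_mul {𝕜 : Type*}
    [NontriviallyNormedField 𝕜] [CompleteSpace 𝕜] {f : 𝕜 → 𝕜} {c : ℕ → 𝕜} {x : 𝕜}
    {r : ENNReal} (h : HasFPowerSeriesOnBall f (ofScalars 𝕜 c) x r) (n : ℕ) :
    iteratedDeriv n f x = n ! * c n := by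
  simpa [iteratedDeriv_eq_iteratedFDeriv, ofScalars_apply_eq, nsmul_eq_mul]
    using (h.factorial_smul 1 n).symm

lemma sum_range_ite_dvd {M : Type*} [AddCommMonoid M] {j : ℕ} (hj : 0 < j) (n : ℕ)
    (F : ℕ → M) :
    ∑ i ∈ range (n + 1), (if j ∣ i then F (i / j) else 0) = ∑ k ∈ range (n / j + 1), F k := by
  rw [← sum_filter]
  refine sum_nbij' (· / j) (j * ·) ?_ ?_ ?_ ?_ ?_
  · intro i hi
    rw [mem_filter, mem_range, Nat.lt_succ_iff] at hi
    exact mem_range_succ_iff.mpr (Nat.div_le_div_right hi.1)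
  · intro k hk
    rw [mem_range_succ_iff] at hk
    refine mem_filter.mpr ⟨mem_range_succ_iff.mpr ?_, dvd_mul_right j k⟩
    exact (Nat.mul_le_mul_left j hk).trans (Nat.mul_div_le n j)
  · intro i hi
    exact Nat.mul_div_cancel' (mem_filter.mp hi).2
  · intro k _
    exact Nat.mul_div_cancel_left k hj
  · intro i _
    rfl

noncomputable def expMulPowCoeff (c : ℝ) (j n : ℕ) : ℝ :=
  if j ∣ n then c ^ (n / j) / (n / j)! else 0

lemma hasSum_expMulPowCoeff (c t : ℝ) {j : ℕ} (hj : 0 < j) :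
    HasSum (fun n => expMulPowCoeff c j n * t ^ n) (exp (c * t ^ j)) := by
  have hinj : Function.Injective (j * ·) := fun _ _ h => Nat.eq_of_mul_eq_mul_left hj h
  rw [← hinj.hasSum_iff]
  · have hexp := NormedSpace.expSeries_div_hasSum_exp (c * t ^ j)
    rw [← Real.exp_eq_exp_ℝ] at hexp
    refine hexp.congr_fun fun k => ?_
    simp only [Function.comp_apply, expMulPowCoeff, dvd_mul_right, if_true,
      Nat.mul_div_cancel_left _ hj, pow_mul, mul_pow]
    ring
  · rintro n hn
    have hndvd : ¬ j ∣ n := fun ⟨k, hk⟩ => hn ⟨k, hk.symm⟩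
    simp [expMulPowCoeff, hndvd]

lemma hasFPowerSeriesOnBall_exp_mul_pow (c : ℝ) {j : ℕ} (hj : 0 < j) :
    HasFPowerSeriesOnBall (fun t => exp (c * t ^ j)) (ofScalars ℝ (expMulPowCoeff c j)) 0 1 where
  r_le := le_radius_of_summable _ (by simpa using (hasSum_expMulPowCoeff c 1 hj).summable.abs)
  r_pos := one_pos
  hasSum _ := by simpa [ofScalars_apply_eq, mul_comm] using hasSum_expMulPowCoeff c _ hj

lemma iteratedDeriv_exp_mul_pow_zero (c : ℝ) {j : ℕ} (hj : 0 < j) (n : ℕ) :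
    iteratedDeriv n (fun t => exp (c * t ^ j)) 0 = n ! * expMulPowCoeff c j n :=
  (hasFPowerSeriesOnBall_exp_mul_pow c hj).iteratedDeriv_eq_factorial_mul n

lemma iteratedDeriv_exp_mul_pow_mul_zero {f : ℝ → ℝ} (c : ℝ) {j : ℕ} (hj : 0 < j) (n : ℕ)
    (hf : ContDiffAt ℝ n f 0) :
    iteratedDeriv n (fun t => exp (c * t ^ j) * f t) 0 =
      n ! * ∑ k ∈ range (n / j + 1),
        c ^ k * iteratedDeriv (n - j * k) f 0 / ((n - j * k)! * k !) := by
  rw [iteratedDeriv_fun_mul (by fun_prop) hf, mul_sum, ← sum_range_ite_dvd hj]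
  refine sum_congr rfl fun i hi => ?_
  rw [iteratedDeriv_exp_mul_pow_zero c hj, expMulPowCoeff]
  split_ifs with hdvd
  · obtain ⟨k, rfl⟩ := hdvd
    rw [Nat.mul_div_cancel_left k hj, Nat.cast_choose ℝ (mem_range_succ_iff.mp hi)]
    field_simp
  · simp

lemma hermiteKdF2_eq_iteratedDeriv (n : ℕ) (x y : ℝ) :
    hermiteKdF2 n x y = iteratedDeriv n (fun t => exp (x * t + y * t ^ 2)) 0 := by
  simp_rw [add_comm (x * _), exp_add]
  rw [iteratedDeriv_exp_mul_pow_mul_zero y two_pos n (by fun_prop), hermiteKdF2]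
  simp [mul_comm]

lemma hermiteKdF3_eq_iteratedDeriv (n : ℕ) (x y z : ℝ) :
    hermiteKdF3 n x y z = iteratedDeriv n (fun t => exp (x * t + y * t ^ 2 + z * t ^ 3)) 0 := by
  simp_rw [add_comm _ (z * _), exp_add (z * _)]
  rw [iteratedDeriv_exp_mul_pow_mul_zero z three_pos n (by fun_prop), hermiteKdF3]
  simp_rw [← hermiteKdF2_eq_iteratedDeriv]

theorem iteratedDeriv_exp_cube (a x : ℝ) (n : ℕ) :
    iteratedDeriv n (fun t => Real.exp (a * t ^ 3)) x =
      hermiteKdF3 n (3 * a * x ^ 2) (3 * a * x) a * Real.exp (a * x ^ 3) := by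
  have htranslate : iteratedDeriv n (fun t => exp (a * t ^ 3)) x =
      iteratedDeriv n (fun t => exp (a * (t + x) ^ 3)) 0 := by
    simpa using (congrFun (iteratedDeriv_comp_add_const n (fun t => exp (a * t ^ 3)) x) 0).symm
  have hfactor : (fun t => exp (a * (t + x) ^ 3)) =
      fun t => exp (a * x ^ 3) * exp (3 * a * x ^ 2 * t + 3 * a * x * t ^ 2 + a * t ^ 3) := by
    funext t
    rw [← exp_add]
    ring_nf
  rw [htranslate, hfactor, iteratedDeriv_const_mul_field, hermiteKdF3_eq_iteratedDeriv, mul_comm]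
end

section
/- Let f : ℝ → ℝ be n-times differentiable. Then for every real x, dⁿ/dxⁿ [f(x³)] = n! · Σ_{k=0}^{⌊n/3⌋} Σ_{m=0}^{⌊(n−3k)/2⌋} 3^{n−3k−m} · x^{2n−6k−3m} / ((n−3k−2m)! k! m!) · f^{(n−2k−m)}(x³). -/
/-!
Since `(x + h)³ = x³ + 3x²·h + 3x·h² + h³`, formally expanding `f((x + h)³)` in powers of `h`
picks, for the coefficient of `hⁿ`, `a` factors `3x²h`, `b` factors `3xh²` and `c` factors `h³`
with `a + 2b + 3c = n`; this gives the term `n!/(a! b! c!) · 3^(a+b) x^(2a+b) f^(a+b+c)(x³)`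
(`k = c`, `m = b` in the statement). The formula is proved by induction on `n`: differentiating
the term of `(a, b, c)` produces terms of `(a+1, b, c)`, `(a-1, b+1, c)` and `(a, b-1, c+1)`, which
is matched by splitting `(n + 1)! = n! · (a + 2b + 3c)`.
-/

open Finset Nat

def tripleWeight (p : ℕ × ℕ × ℕ) : ℕ := p.1 + 2 * p.2.1 + 3 * p.2.2

def triplesOfWeight (n : ℕ) : Finset (ℕ × ℕ × ℕ) :=
  {p ∈ range (n + 1) ×ˢ range (n + 1) ×ˢ range (n + 1) | tripleWeight p = n}

@[simp]
lemma mem_triplesOfWeight {n : ℕ} {p : ℕ × ℕ × ℕ} :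
    p ∈ triplesOfWeight n ↔ tripleWeight p = n := by
  simp only [triplesOfWeight, mem_filter, mem_product, mem_range, and_iff_right_iff_imp]
  unfold tripleWeight
  omega

lemma sum_triplesOfWeight_eq_of_shift {M : Type*} [AddCommMonoid M] {m m' : ℕ}
    {g h : ℕ × ℕ × ℕ → M} (u v : ℕ × ℕ × ℕ) (hw : m + tripleWeight u = m' + tripleWeight v)
    (hg : ∀ q, ¬v ≤ q → g q = 0) (hh : ∀ p, ¬u ≤ p → h p = 0)
    (hgh : ∀ r, g (r + v) = h (r + u)) :
    ∑ q ∈ triplesOfWeight m, g q = ∑ p ∈ triplesOfWeight m', h p := by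
  rw [← sum_filter_of_ne fun q _ hq => not_not.1 (mt (hg q) hq),
    ← sum_filter_of_ne fun p _ hp => not_not.1 (mt (hh p) hp)]
  obtain ⟨u₁, u₂, u₃⟩ := u
  obtain ⟨v₁, v₂, v₃⟩ := v
  simp only [tripleWeight] at hw
  refine sum_nbij' (fun q => q - (v₁, v₂, v₃) + (u₁, u₂, u₃))
    (fun p => p - (u₁, u₂, u₃) + (v₁, v₂, v₃)) ?_ ?_ ?_ ?_ ?_
  all_goals
    rintro ⟨a, b, c⟩ habc
    simp only [mem_filter, mem_triplesOfWeight, tripleWeight, Prod.mk_le_mk] at habc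
    simp only [mem_filter, mem_triplesOfWeight, tripleWeight, Prod.mk_le_mk, Prod.mk_sub_mk,
      Prod.mk_add_mk, Prod.mk.injEq]
  · omega
  · omega
  · omega
  · omega
  · obtain ⟨-, ha, hb, hc⟩ := habc
    have := hgh (a - v₁, b - v₂, c - v₃)
    simp only [Prod.mk_add_mk] at this
    rwa [Nat.sub_add_cancel ha, Nat.sub_add_cancel hb, Nat.sub_add_cancel hc] at this

lemma sum_triplesOfWeight {M : Type*} [AddCommMonoid M] (n : ℕ) (F : ℕ × ℕ × ℕ → M) :
    ∑ p ∈ triplesOfWeight n, F p =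
      ∑ k ∈ range (n / 3 + 1), ∑ m ∈ range ((n - 3 * k) / 2 + 1), F (n - 3 * k - 2 * m, m, k) := by
  rw [sum_sigma']
  refine sum_nbij' (fun p => ⟨p.2.2, p.2.1⟩) (fun q => (n - 3 * q.1 - 2 * q.2, q.2, q.1))
    ?_ ?_ ?_ ?_ ?_
  · rintro ⟨a, b, c⟩ h
    simp only [mem_triplesOfWeight, tripleWeight, mem_sigma, mem_range] at h ⊢
    omega
  · rintro ⟨k, m⟩ h
    simp only [mem_triplesOfWeight, tripleWeight, mem_sigma, mem_range] at h ⊢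
    omega
  · rintro ⟨a, b, c⟩ h
    simp only [mem_triplesOfWeight, tripleWeight, Prod.mk.injEq, and_true] at h ⊢
    omega
  · rintro ⟨k, m⟩ -
    rfl
  · rintro ⟨a, b, c⟩ h
    simp only [mem_triplesOfWeight, tripleWeight] at h
    dsimp only
    congr
    omega

section Field

variable {K : Type*} [Field K]

def cubeCoeff (n : ℕ) (p : ℕ × ℕ × ℕ) : K :=
  n ! / (p.1 ! * p.2.1 ! * p.2.2 !) * 3 ^ (p.1 + p.2.1)

def cubeTerm (n : ℕ) (p : ℕ × ℕ × ℕ) (x : K) (d : ℕ → K) : K :=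
  cubeCoeff n p * (x ^ (2 * p.1 + p.2.1) * d (p.1 + p.2.1 + p.2.2))

lemma cubeTerm_succ (n : ℕ) (p : ℕ × ℕ × ℕ) (x : K) (d : ℕ → K) :
    cubeTerm (n + 1) p x d = (n + 1) * cubeTerm n p x d := by
  simp only [cubeTerm, cubeCoeff, factorial_succ]
  push_cast
  ring

/-- `x ^ (2a + b - 1)` is a junk value when `2a + b = 0`, but its coefficient vanishes there. -/
lemma sum_cubeTerm_succ [CharZero K] (n : ℕ) (x : K) (d : ℕ → K) :
    ∑ q ∈ triplesOfWeight (n + 1), cubeTerm (n + 1) q x d =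
      ∑ p ∈ triplesOfWeight n, cubeCoeff n p *
        (((2 * p.1 + p.2.1 : ℕ) : K) * x ^ (2 * p.1 + p.2.1 - 1) * d (p.1 + p.2.1 + p.2.2) +
          3 * x ^ (2 * p.1 + p.2.1 + 2) * d (p.1 + p.2.1 + p.2.2 + 1)) := by
  set X := fun q => cubeTerm n q x d
  set Y := fun p : ℕ × ℕ × ℕ => cubeCoeff n p * x ^ (2 * p.1 + p.2.1 - 1) * d (p.1 + p.2.1 + p.2.2)
  set Z := fun p : ℕ × ℕ × ℕ =>
    cubeCoeff n p * x ^ (2 * p.1 + p.2.1 + 2) * d (p.1 + p.2.1 + p.2.2 + 1)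
  obtain ⟨h₁, h₂, h₃⟩ :
      ∑ q ∈ triplesOfWeight (n + 1), (q.1 : K) * X q = ∑ p ∈ triplesOfWeight n, 3 * Z p ∧
      ∑ q ∈ triplesOfWeight (n + 1), (2 * q.2.1 : K) * X q =
        ∑ p ∈ triplesOfWeight n, (2 * p.1 : K) * Y p ∧
      ∑ q ∈ triplesOfWeight (n + 1), (3 * q.2.2 : K) * X q =
        ∑ p ∈ triplesOfWeight n, (p.2.1 : K) * Y p := by
    have hexp : ∀ a b : ℕ, 2 * (a + 1) + b - 1 = 2 * a + b + 1 := by omega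
    refine ⟨sum_triplesOfWeight_eq_of_shift 0 (1, 0, 0) rfl ?_ ?_ ?_,
      sum_triplesOfWeight_eq_of_shift (1, 0, 0) (0, 1, 0) rfl ?_ ?_ ?_,
      sum_triplesOfWeight_eq_of_shift (0, 1, 0) (0, 0, 1) rfl ?_ ?_ ?_⟩
    all_goals
      rintro ⟨a, b, c⟩
      first
      | intro h; simp_all [Prod.mk_le_mk]
      | simp only [X, Y, Z, cubeTerm, cubeCoeff, Prod.mk_add_mk, add_zero, hexp, add_succ_sub_one,
          factorial_succ]
        push_cast
        field_simp
        ring_nf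
  calc ∑ q ∈ triplesOfWeight (n + 1), cubeTerm (n + 1) q x d
      = ∑ q ∈ triplesOfWeight (n + 1), ((q.1 : K) * X q + (2 * q.2.1 : K) * X q +
          (3 * q.2.2 : K) * X q) := by
        refine sum_congr rfl fun q hq => ?_
        rw [cubeTerm_succ, ← Nat.cast_add_one, ← mem_triplesOfWeight.1 hq, tripleWeight]
        push_cast
        ring
    _ = ∑ p ∈ triplesOfWeight n, (3 * Z p + (2 * p.1 : K) * Y p + (p.2.1 : K) * Y p) := by
        simp only [sum_add_distrib, h₁, h₂, h₃]
    _ = _ := by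
        refine sum_congr rfl fun p _ => ?_
        simp only [Y, Z]
        push_cast
        ring

end Field

section Deriv

variable {𝕜 : Type*} [NontriviallyNormedField 𝕜]

lemma hasDerivAt_pow_mul_comp_cube (e : ℕ) {g : 𝕜 → 𝕜} {g' x : 𝕜}
    (hg : HasDerivAt g g' (x ^ 3)) :
    HasDerivAt (fun y => y ^ e * g (y ^ 3))
      (e * x ^ (e - 1) * g (x ^ 3) + 3 * x ^ (e + 2) * g') x := by
  have hcomp : HasDerivAt (fun y => g (y ^ 3)) (g' * (3 * x ^ 2)) x :=
    hg.comp x ((hasDerivAt_pow 3 x).congr_deriv (by norm_num))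
  exact ((hasDerivAt_pow e x).mul hcomp).congr_deriv (by ring)

theorem iteratedDeriv_comp_cube_eq_sum [CharZero 𝕜] {n : ℕ} {f : 𝕜 → 𝕜} (hf : ContDiff 𝕜 n f) :
    iteratedDeriv n (fun t => f (t ^ 3)) =
      fun x => ∑ p ∈ triplesOfWeight n, cubeTerm n p x fun j => iteratedDeriv j f (x ^ 3) := by
  induction n with
  | zero =>
    have h₀ : triplesOfWeight 0 = {(0, 0, 0)} := by decide
    ext x
    simp [h₀, cubeTerm, cubeCoeff]
  | succ n ih =>
    ext x
    rw [iteratedDeriv_succ, ih (hf.of_le (by norm_cast; omega)), sum_cubeTerm_succ]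
    refine (HasDerivAt.fun_sum fun p hp => ?_).deriv
    have hj : p.1 + p.2.1 + p.2.2 < n + 1 := by
      have := mem_triplesOfWeight.1 hp
      unfold tripleWeight at this
      omega
    have hg := ((hf.differentiable_iteratedDeriv _ (mod_cast hj)) (x ^ 3)).hasDerivAt
    rw [← iteratedDeriv_succ] at hg
    exact (hasDerivAt_pow_mul_comp_cube _ hg).const_mul _

end Deriv

theorem iteratedDeriv_comp_cube (n : ℕ) (f : ℝ → ℝ) (hf : ContDiff ℝ n f) (x : ℝ) :
    iteratedDeriv n (fun t => f (t ^ 3)) x =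
      (n.factorial : ℝ) * ∑ k ∈ Finset.range (n / 3 + 1),
        ∑ m ∈ Finset.range ((n - 3 * k) / 2 + 1),
          (3 : ℝ) ^ (n - 3 * k - m) * x ^ (2 * n - 6 * k - 3 * m) /
              (((n - 3 * k - 2 * m).factorial : ℝ) * k.factorial * m.factorial) *
            iteratedDeriv (n - 2 * k - m) f (x ^ 3) := by
  simp only [iteratedDeriv_comp_cube_eq_sum hf]
  rw [sum_triplesOfWeight, mul_sum]
  refine sum_congr rfl fun k hk => ?_
  rw [mul_sum]
  refine sum_congr rfl fun m hm => ?_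
  rw [mem_range] at hk hm
  obtain ⟨a, rfl⟩ : ∃ a, n = a + 2 * m + 3 * k := ⟨n - 3 * k - 2 * m, by omega⟩
  rw [show a + 2 * m + 3 * k - 3 * k - 2 * m = a by omega,
    show a + 2 * m + 3 * k - 3 * k - m = a + m by omega,
    show 2 * (a + 2 * m + 3 * k) - 6 * k - 3 * m = 2 * a + m by omega,
    show a + 2 * m + 3 * k - 2 * k - m = a + m + k by omega]
  simp only [cubeTerm, cubeCoeff]
  ring
end

section
/- The three-variable Hermite–Kampé de Fériet polynomials satisfy the addition formula H_n^{(3)}(x₁ + x₂, y₁ + y₂, z₁ + z₂) = Σ_{k=0}^{n} C(n, k) · H_{n−k}^{(3)}(x₁, y₁, z₁) · H_k^{(3)}(x₂, y₂, z₂) for all real arguments and every natural number n. -/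
open Finset

/-!
The exponential generating function of `H_n^{(3)}(x, y, z)` is `exp (x t + y t² + z t³)`.
It is multiplicative in `(x, y, z)` because `exp` turns sums into products, and comparing the
coefficients of `t^n / n!` in a product of exponential generating functions gives the binomial
convolution on the right-hand side.
-/

open PowerSeries

theorem Finset.sum_range_succ_ite_dvd {M : Type*} [AddCommMonoid M] {d : ℕ} (hd : d ≠ 0)
    (n : ℕ) (F : ℕ → M) :
    ∑ i ∈ range (n + 1), (if d ∣ i then F i else 0) = ∑ k ∈ range (n / d + 1), F (d * k) := by
  have hfilter : {i ∈ range (n + 1) | d ∣ i} = (range (n / d + 1)).image (d * ·) := by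
    ext i
    simp only [mem_filter, mem_range, mem_image, Nat.lt_succ_iff, Nat.le_div_iff_mul_le hd.bot_lt]
    constructor
    · rintro ⟨hin, k, rfl⟩
      exact ⟨k, by rwa [mul_comm], rfl⟩
    · rintro ⟨k, hk, rfl⟩
      exact ⟨by rwa [mul_comm], dvd_mul_right d k⟩
  rw [← sum_filter, hfilter, sum_image fun a _ b _ h => Nat.eq_of_mul_eq_mul_left hd.bot_lt h]

namespace PowerSeries

theorem coeff_mul_expand {R : Type*} [CommRing R] {d : ℕ} (hd : d ≠ 0) (f g : R⟦X⟧) (n : ℕ) :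
    coeff n (f * expand d hd g) = ∑ k ∈ range (n / d + 1), coeff (n - d * k) f * coeff k g := by
  rw [mul_comm, coeff_mul,
    Nat.sum_antidiagonal_eq_sum_range_succ fun i j => coeff i (expand d hd g) * coeff j f]
  simp only [coeff_expand, ite_mul, zero_mul]
  rw [sum_range_succ_ite_dvd hd n fun i => coeff (i / d) g * coeff (n - i) f]
  simp only [Nat.mul_div_cancel_left _ hd.bot_lt, mul_comm]

theorem coeff_rescale_exp {K : Type*} [Field K] [CharZero K] (a : K) (n : ℕ) :
    coeff n (rescale a (exp K)) = a ^ n / n.factorial := by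
  simp [coeff_exp, div_eq_mul_inv]

theorem coeff_mul_of_coeff_eq_div_factorial {K : Type*} [Field K] [CharZero K] {f g : K⟦X⟧}
    {a b : ℕ → K} (hf : ∀ n, coeff n f = a n / n.factorial)
    (hg : ∀ n, coeff n g = b n / n.factorial) (n : ℕ) :
    coeff n (f * g) =
      (∑ k ∈ range (n + 1), (n.choose k : K) * a (n - k) * b k) / n.factorial := by
  rw [mul_comm, coeff_mul, Nat.sum_antidiagonal_eq_sum_range_succ fun i j => coeff i g * coeff j f,
    sum_div]
  refine sum_congr rfl fun k hk => ?_
  have hn : (n.factorial : K) ≠ 0 := Nat.cast_ne_zero.mpr n.factorial_ne_zero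
  rw [hf, hg, Nat.cast_choose K (Nat.lt_succ_iff.mp (mem_range.mp hk))]
  field_simp

end PowerSeries

/-- `exp (x t + y t²)`. -/
noncomputable def hermiteKdF2GF (x y : ℝ) : ℝ⟦X⟧ :=
  rescale x (exp ℝ) * expand 2 two_ne_zero (rescale y (exp ℝ))

/-- `exp (x t + y t² + z t³)`. -/
noncomputable def hermiteKdF3GF (x y z : ℝ) : ℝ⟦X⟧ :=
  hermiteKdF2GF x y * expand 3 three_ne_zero (rescale z (exp ℝ))

theorem coeff_hermiteKdF2GF (x y : ℝ) (n : ℕ) :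
    coeff n (hermiteKdF2GF x y) = hermiteKdF2 n x y / n.factorial := by
  rw [hermiteKdF2GF, coeff_mul_expand, hermiteKdF2, mul_div_cancel_left₀ _ (by positivity)]
  refine sum_congr rfl fun k _ => ?_
  rw [coeff_rescale_exp, coeff_rescale_exp, div_mul_div_comm]

theorem coeff_hermiteKdF3GF (x y z : ℝ) (n : ℕ) :
    coeff n (hermiteKdF3GF x y z) = hermiteKdF3 n x y z / n.factorial := by
  rw [hermiteKdF3GF, coeff_mul_expand, hermiteKdF3, mul_div_cancel_left₀ _ (by positivity)]
  refine sum_congr rfl fun k _ => ?_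
  rw [coeff_hermiteKdF2GF, coeff_rescale_exp]
  ring

theorem hermiteKdF3GF_add (x₁ x₂ y₁ y₂ z₁ z₂ : ℝ) :
    hermiteKdF3GF (x₁ + x₂) (y₁ + y₂) (z₁ + z₂) =
      hermiteKdF3GF x₁ y₁ z₁ * hermiteKdF3GF x₂ y₂ z₂ := by
  simp only [hermiteKdF3GF, hermiteKdF2GF, ← exp_mul_exp_eq_exp_add, map_mul]
  ring

theorem hermiteKdF3_add (n : ℕ) (x₁ x₂ y₁ y₂ z₁ z₂ : ℝ) :
    hermiteKdF3 n (x₁ + x₂) (y₁ + y₂) (z₁ + z₂) =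
      ∑ k ∈ Finset.range (n + 1),
        (n.choose k : ℝ) * hermiteKdF3 (n - k) x₁ y₁ z₁ * hermiteKdF3 k x₂ y₂ z₂ := by
  have h := coeff_mul_of_coeff_eq_div_factorial (coeff_hermiteKdF3GF x₁ y₁ z₁)
    (coeff_hermiteKdF3GF x₂ y₂ z₂) n
  rw [← hermiteKdF3GF_add, coeff_hermiteKdF3GF] at h
  exact (div_left_inj' (by positivity)).mp h
end

section
/- Let m ≥ 1 be a natural number. For all real a, x and every natural number n, dⁿ/dxⁿ e^{a x^m} = H_n^{(m)}(a·C(m,1)·x^{m−1}, a·C(m,2)·x^{m−2}, …, a·C(m,m)·x⁰) · e^{a x^m}, where H_n^{(m)} is the m-variable Hermite–Kampé de Fériet polynomial. -/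
open Finset

/-- The `(m+1)`-variable Hermite–Kampé de Fériet polynomials:
`hermiteKdF m n ξ` is `H_n^{(m+1)}(ξ 0, ξ 1, …, ξ m)`, defined recursively by
`H_n^{(1)}(ξ₁) = ξ₁ ^ n` and
`H_n^{(m)}(ξ₁, …, ξ_m) = n! Σ_{k=0}^{⌊n/m⌋} ξ_m^k / ((n−mk)! k!) · H_{n−mk}^{(m−1)}(ξ₁, …, ξ_{m−1})`. -/
noncomputable def hermiteKdF : ℕ → ℕ → (ℕ → ℝ) → ℝ
  | 0, n, ξ => ξ 0 ^ n
  | m + 1, n, ξ =>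
      (n.factorial : ℝ) * ∑ k ∈ Finset.range (n / (m + 2) + 1),
        ξ (m + 1) ^ k / ((n - (m + 2) * k).factorial * k.factorial) *
          hermiteKdF m (n - (m + 2) * k) ξ

/-!
Put `ξᵢ(x) = a C(m, i+1) x^(m-i-1)`, so that `ξᵢ' = (i+2) ξᵢ₊₁`, `ξ₀ = (a x^m)'` and `ξₘ = 0`. Along
any family with `ξᵢ' = (i+2) ξᵢ₊₁`, the derivative of `H_n(ξ)` is `H_{n+1}(ξ) - ξ₀ H_n(ξ)` plus a
multiple of the first variable that `H` does not see. Here that variable is `ξₘ = 0`, hence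
`(H_n(ξ) e^(a x^m))' = H_{n+1}(ξ) e^(a x^m)`, and the theorem follows by induction on `n`.

The derivative formula is proved by induction on the number of variables: the recursive definition
says that adding a variable `c` of weight `k` convolves `H` binomially with the derivatives at `0`
of `t ↦ exp (c t^k)`. Differentiating a binomial convolution then leaves only Pascal's rule and
`C(n, i) i(i-1)⋯(i-k+1) = n(n-1)⋯(n-k+1) C(n-k, i-k)`.
-/

open Nat

section BinomConv

variable {R : Type*} [CommSemiring R]

def binomConv (u v : ℕ → R) (n : ℕ) : R :=
  ∑ ij ∈ antidiagonal n, (n.choose ij.1 : R) * u ij.1 * v ij.2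

theorem binomConv_eq_sum_range (u v : ℕ → R) (n : ℕ) :
    binomConv u v n = ∑ i ∈ range (n + 1), (n.choose i : R) * u i * v (n - i) :=
  Nat.sum_antidiagonal_eq_sum_range_succ (fun i j => (n.choose i : R) * u i * v j) n

theorem binomConv_comm (u v : ℕ → R) (n : ℕ) : binomConv u v n = binomConv v u n := by
  rw [binomConv, ← Nat.sum_antidiagonal_swap, binomConv]
  refine sum_congr rfl fun ij hij => ?_
  rw [Nat.choose_symm_of_eq_add (mem_antidiagonal.1 hij).symm]
  simp only [Prod.fst_swap, Prod.snd_swap]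
  ring

theorem binomConv_succ (u v : ℕ → R) (n : ℕ) :
    binomConv u v (n + 1) =
      binomConv u (fun j => v (j + 1)) n + binomConv (fun i => u (i + 1)) v n := by
  rw [binomConv, binomConv, binomConv]
  have := sum_antidiagonal_choose_succ_mul (fun i j => u i * v j) n
  simp only [← mul_assoc] at this
  rw [this]
  congr 1
  refine sum_congr rfl fun ij hij => ?_
  rw [Nat.choose_symm_of_eq_add (mem_antidiagonal.1 hij).symm]

theorem binomConv_mul_left (a : R) (u v : ℕ → R) (n : ℕ) :
    binomConv (fun i => a * u i) v n = a * binomConv u v n := by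
  simp only [binomConv, mul_sum]
  exact sum_congr rfl fun _ _ => by ring

theorem binomConv_mul_right (a : R) (u v : ℕ → R) (n : ℕ) :
    binomConv u (fun j => a * v j) n = a * binomConv u v n := by
  rw [binomConv_comm, binomConv_mul_left, binomConv_comm]

theorem binomConv_add_right (u v w : ℕ → R) (n : ℕ) :
    binomConv u (fun j => v j + w j) n = binomConv u v n + binomConv u w n := by
  simp only [binomConv, mul_add, sum_add_distrib]

theorem Nat.choose_mul_descFactorial (n i k : ℕ) (hk : k ≤ i) :
    n.choose i * i.descFactorial k = n.descFactorial k * (n - k).choose (i - k) := by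
  rw [descFactorial_eq_factorial_mul_choose, descFactorial_eq_factorial_mul_choose,
    mul_left_comm, Nat.choose_mul hk]
  ring

theorem binomConv_descFactorial_left (k : ℕ) (u v : ℕ → R) (n : ℕ) :
    binomConv (fun i => (i.descFactorial k : R) * u (i - k)) v n =
      n.descFactorial k * binomConv u v (n - k) := by
  rcases lt_or_ge n k with hn | hn
  · rw [descFactorial_eq_zero_iff_lt.2 hn, binomConv]
    refine (sum_eq_zero fun ij hij => ?_).trans (by simp)
    have : ij.1 < k := by have := mem_antidiagonal.1 hij; omega
    simp [descFactorial_eq_zero_iff_lt.2 this]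
  obtain ⟨p, rfl⟩ := exists_add_of_le hn
  rw [binomConv_eq_sum_range, binomConv_eq_sum_range, Nat.add_sub_cancel_left, add_assoc,
    sum_range_add, mul_sum,
    sum_eq_zero fun i hi => by simp [descFactorial_eq_zero_iff_lt.2 (mem_range.1 hi)], zero_add]
  refine sum_congr rfl fun i _ => ?_
  have hc := choose_mul_descFactorial (k + p) (k + i) k (Nat.le_add_right k i)
  rw [Nat.add_sub_cancel_left, Nat.add_sub_cancel_left] at hc
  rw [Nat.add_sub_add_left, Nat.add_sub_cancel_left]
  calc _ = (((k + p).choose (k + i) * (k + i).descFactorial k : ℕ) : R) * u i * v (p - i) := by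
        push_cast; ring
    _ = _ := by rw [hc]; push_cast; ring

end BinomConv

theorem binomConv_sub_right {R : Type*} [CommRing R] (u v w : ℕ → R) (n : ℕ) :
    binomConv u (fun j => v j - w j) n = binomConv u v n - binomConv u w n := by
  simp only [binomConv, mul_sub, sum_sub_distrib]

theorem HasDerivAt.binomConv {𝕜 : Type*} [NontriviallyNormedField 𝕜]
    {u v : 𝕜 → ℕ → 𝕜} {u' v' : ℕ → 𝕜} {x : 𝕜} (hu : ∀ i, HasDerivAt (fun t => u t i) (u' i) x)
    (hv : ∀ j, HasDerivAt (fun t => v t j) (v' j) x) (n : ℕ) :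
    HasDerivAt (fun t => binomConv (u t) (v t) n)
      (binomConv u' (v x) n + binomConv (u x) v' n) x := by
  unfold _root_.binomConv
  rw [← sum_add_distrib]
  refine (HasDerivAt.fun_sum fun ij _ => ((hu ij.1).const_mul _).mul (hv ij.2)).congr_deriv ?_
  exact sum_congr rfl fun _ _ => by ring

/-- `expMonomialCoeff k c j` is the `j`-th derivative at `0` of `t ↦ exp (c * t ^ k)`. -/
noncomputable def expMonomialCoeff (k : ℕ) (c : ℝ) (j : ℕ) : ℝ :=
  if k ∣ j then (j ! / (j / k)! : ℝ) * c ^ (j / k) else 0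

theorem expMonomialCoeff_mul {k : ℕ} (hk : 0 < k) (c : ℝ) (q : ℕ) :
    expMonomialCoeff k c (k * q) = ((k * q)! / q ! : ℝ) * c ^ q := by
  simp [expMonomialCoeff, Nat.mul_div_cancel_left q hk]

theorem descFactorial_mul_expMonomialCoeff_of_not_dvd {k j : ℕ} (c : ℝ) (h : ¬ k ∣ j) :
    j.descFactorial k * expMonomialCoeff k c (j - k) = 0 := by
  rcases lt_or_ge j k with hj | hj
  · simp [descFactorial_eq_zero_iff_lt.2 hj]
  have : ¬ k ∣ j - k := fun hd => h (by simpa [Nat.sub_add_cancel hj] using dvd_add hd dvd_rfl)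
  simp [expMonomialCoeff, this]

theorem hasDerivAt_expMonomialCoeff {k : ℕ} (hk : 0 < k) (c : ℝ) (j : ℕ) :
    HasDerivAt (fun c => expMonomialCoeff k c j)
      (j.descFactorial k * expMonomialCoeff k c (j - k)) c := by
  by_cases hj : k ∣ j
  · obtain ⟨q, rfl⟩ := hj
    simp only [expMonomialCoeff_mul hk]
    refine ((hasDerivAt_pow q c).const_mul _).congr_deriv ?_
    rcases q with _ | p
    · simp [hk]
    have hd : ((k * p)! : ℝ) * (k * p + k).descFactorial k = (k * p + k)! := by
      rw [add_descFactorial_eq_ascFactorial]; exact_mod_cast factorial_mul_ascFactorial _ _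
    rw [_root_.mul_add_one, show k * p + k - k = k * p by omega, expMonomialCoeff_mul hk, ← hd,
      factorial_succ]
    field_simp
    push_cast
    ring
  · rw [descFactorial_mul_expMonomialCoeff_of_not_dvd c hj]
    exact (hasDerivAt_const c 0).congr_of_eventuallyEq
      (Filter.Eventually.of_forall fun c' => if_neg hj)

theorem expMonomialCoeff_succ (k : ℕ) (c : ℝ) (j : ℕ) :
    expMonomialCoeff (k + 1) c (j + 1) =
      (k + 1) * c * j.descFactorial k * expMonomialCoeff (k + 1) c (j - k) := by
  by_cases hj : k + 1 ∣ j + 1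
  · obtain ⟨q, hq⟩ := hj
    rcases q with _ | p
    · omega
    obtain rfl : j = (k + 1) * p + k := by rw [Nat.mul_succ] at hq; omega
    have hd : (((k + 1) * p)! : ℝ) * ((k + 1) * p + k).descFactorial k = ((k + 1) * p + k)! := by
      rw [add_descFactorial_eq_ascFactorial]; exact_mod_cast factorial_mul_ascFactorial _ _
    have hk : 0 < k + 1 := k.succ_pos
    rw [hq, Nat.add_sub_cancel, expMonomialCoeff_mul hk, expMonomialCoeff_mul hk, ← hq]
    push_cast [factorial_succ]
    rw [← hd]
    field_simp
    ring
  · rw [expMonomialCoeff, if_neg hj]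
    have h := descFactorial_mul_expMonomialCoeff_of_not_dvd c hj
    rw [Nat.succ_descFactorial_succ, Nat.add_sub_add_right] at h
    push_cast at h
    rw [mul_assoc] at h
    linear_combination (-((k + 1) * c)) * (mul_eq_zero.1 h).resolve_left (by positivity)

theorem hermiteKdF_succ_eq_binomConv (M n : ℕ) (ξ : ℕ → ℝ) :
    hermiteKdF (M + 1) n ξ =
      binomConv (expMonomialCoeff (M + 2) (ξ (M + 1))) (fun j => hermiteKdF M j ξ) n := by
  have hk : 0 < M + 2 := by omega
  have hmem (q : ℕ) : q ∈ range (n / (M + 2) + 1) ↔ (M + 2) * q ≤ n := by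
    rw [mem_range, Nat.lt_succ_iff, Nat.le_div_iff_mul_le hk, mul_comm]
  rw [hermiteKdF, binomConv_eq_sum_range, mul_sum,
    ← sum_subset (s₁ := (range (n / (M + 2) + 1)).image ((M + 2) * ·)) (s₂ := range (n + 1)),
    sum_image]
  · refine sum_congr rfl fun q hq => ?_
    rw [expMonomialCoeff_mul hk, ← choose_mul_factorial_mul_factorial ((hmem q).1 hq)]
    push_cast
    field_simp
  · exact fun q _ q' _ h => Nat.eq_of_mul_eq_mul_left hk h
  · intro i hi
    obtain ⟨q, hq, rfl⟩ := mem_image.1 hi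
    exact mem_range.2 (Nat.lt_succ_iff.2 ((hmem q).1 hq))
  · intro i hi hni
    have hndvd : ¬ (M + 2) ∣ i := by
      rintro ⟨q, rfl⟩
      exact hni (mem_image.2 ⟨q, (hmem q).2 (Nat.lt_succ_iff.1 (mem_range.1 hi)), rfl⟩)
    simp [expMonomialCoeff, hndvd]

theorem hermiteKdF_zero (M : ℕ) (ξ : ℕ → ℝ) : hermiteKdF M 0 ξ = 1 := by
  induction M with
  | zero => simp [hermiteKdF]
  | succ M ih => simp [hermiteKdF, ih]

theorem hasDerivAt_hermiteKdF (M : ℕ) {ξ : ℝ → ℕ → ℝ} {x : ℝ}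
    (hξ : ∀ i ≤ M, HasDerivAt (fun t => ξ t i) ((i + 2) * ξ x (i + 1)) x) (n : ℕ) :
    HasDerivAt (fun t => hermiteKdF M n (ξ t))
      (hermiteKdF M (n + 1) (ξ x) - ξ x 0 * hermiteKdF M n (ξ x) +
        (M + 2) * ξ x (M + 1) * n.descFactorial (M + 1) *
          hermiteKdF M (n - (M + 1)) (ξ x)) x := by
  induction M generalizing n with
  | zero =>
    simp only [hermiteKdF]
    refine ((hξ 0 le_rfl).fun_pow n).congr_deriv ?_
    rw [Nat.descFactorial_one]
    push_cast
    ring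
  | succ M ih =>
    set G := expMonomialCoeff (M + 2) (ξ x (M + 1))
    set P := fun j => hermiteKdF M j (ξ x)
    simp only [hermiteKdF_succ_eq_binomConv]
    have hG (j : ℕ) : HasDerivAt (fun t => expMonomialCoeff (M + 2) (ξ t (M + 1)) j)
        ((M + 3) * ξ x (M + 2) * (j.descFactorial (M + 2) * G (j - (M + 2)))) x := by
      refine ((hasDerivAt_expMonomialCoeff (k := M + 2) (by omega) _ j).comp x
        (hξ (M + 1) le_rfl)).congr_deriv ?_
      push_cast
      ring
    have hP (j : ℕ) := ih (fun i hi => hξ i (by omega)) j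
    have hG_succ (i : ℕ) :
        G (i + 1) = (M + 2) * ξ x (M + 1) * (i.descFactorial (M + 1) * G (i - (M + 1))) := by
      refine (expMonomialCoeff_succ (M + 1) _ i).trans ?_
      push_cast
      ring
    have hshift : binomConv G
        (fun j => (M + 2) * ξ x (M + 1) * j.descFactorial (M + 1) * P (j - (M + 1))) n =
        binomConv (fun i => G (i + 1)) P n := by
      simp only [hG_succ, mul_assoc]
      rw [binomConv_comm, binomConv_mul_left, binomConv_mul_left, binomConv_mul_left,
        binomConv_mul_left, binomConv_descFactorial_left, binomConv_descFactorial_left,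
        binomConv_comm]
    refine (HasDerivAt.binomConv hG hP n).congr_deriv ?_
    rw [binomConv_mul_left, binomConv_descFactorial_left, binomConv_add_right, binomConv_sub_right,
      binomConv_mul_right, hshift, binomConv_succ]
    push_cast
    ring

theorem hasDerivAt_mul_choose_mul_pow (a : ℝ) (m i : ℕ) (x : ℝ) :
    HasDerivAt (fun t => a * m.choose (i + 1) * t ^ (m - (i + 1)))
      ((i + 2) * (a * m.choose (i + 2) * x ^ (m - (i + 2)))) x := by
  refine ((hasDerivAt_pow _ x).const_mul _).congr_deriv ?_
  have hc : (m.choose (i + 2) : ℝ) * (i + 2) = m.choose (i + 1) * (m - (i + 1) : ℕ) := by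
    exact_mod_cast Nat.choose_succ_right_eq m (i + 1)
  rw [show m - (i + 1) - 1 = m - (i + 2) by omega]
  linear_combination (a * x ^ (m - (i + 2))) * hc.symm

theorem iteratedDeriv_exp_pow (m : ℕ) (hm : 1 ≤ m) (a x : ℝ) (n : ℕ) :
    iteratedDeriv n (fun t => Real.exp (a * t ^ m)) x =
      hermiteKdF (m - 1) n (fun i => a * (m.choose (i + 1) : ℝ) * x ^ (m - (i + 1))) *
        Real.exp (a * x ^ m) := by
  induction n generalizing x with
  | zero => simp [hermiteKdF_zero]
  | succ n ih =>
    have hH := hasDerivAt_hermiteKdF (m - 1)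
      (ξ := fun t i => a * m.choose (i + 1) * t ^ (m - (i + 1)))
      (fun i _ => hasDerivAt_mul_choose_mul_pow a m i x) n
    have hexp := ((hasDerivAt_pow m x).const_mul a).exp
    rw [iteratedDeriv_succ, funext ih, (hH.fun_mul hexp).deriv]
    simp only [Nat.sub_add_cancel hm, Nat.choose_succ_self, zero_add, Nat.choose_one_right,
      Nat.cast_zero, mul_zero, zero_mul, add_zero]
    ring
end

section
/- Let f : ℝ → ℝ be smooth and let n ≥ 1. Then for every real x > 0, dⁿ/dxⁿ [f(√x)] = Σ_{k=0}^{n−1} (−1)^k · (n+k−1)! / (k! (n−k−1)!) · (2√x)^{−(n+k)} · f^{(n−k)}(√x). -/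
open Finset

noncomputable def Csq (n k : ℕ) : ℝ :=
  (-1 : ℝ) ^ k * ((n + k - 1).factorial : ℝ) / ((k.factorial : ℝ) * (n - k - 1).factorial)

lemma Csq_zero {n : ℕ} (hn : 1 ≤ n) : Csq n 0 = 1 := by
  simp only [Csq, pow_zero, Nat.add_zero, Nat.sub_zero, Nat.factorial_zero, Nat.cast_one, one_mul]
  rw [div_self]
  positivity

lemma Csq_last {n : ℕ} (hn : 1 ≤ n) :
    (-2 : ℝ) * ((n : ℝ) + n - 1) * Csq n (n - 1) = Csq (n + 1) n := by
  obtain ⟨m, rfl⟩ : ∃ m, n = m + 1 := ⟨n - 1, by omega⟩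
  simp only [Csq, show m + 1 - 1 = m from by omega,
    show m + 1 + m - 1 = 2*m from by omega,
    show m + 1 - m - 1 = 0 from by omega,
    show m + 1 + 1 + (m + 1) - 1 = 2*m+1+1 from by omega,
    show m + 1 + 1 - (m + 1) - 1 = 0 from by omega,
    Nat.factorial_succ, Nat.factorial_zero]
  push_cast
  have hm : (m.factorial : ℝ) ≠ 0 := by positivity
  field_simp
  ring

lemma Csq_mid {n k : ℕ} (hk : 1 ≤ k) (hkn : k < n) :
    Csq n k + (-2 : ℝ) * ((n : ℝ) + k - 1) * Csq n (k - 1) = Csq (n + 1) k := by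
  obtain ⟨b, rfl⟩ : ∃ b, k = b + 1 := ⟨k - 1, by omega⟩
  obtain ⟨a, rfl⟩ : ∃ a, n = a + b + 2 := ⟨n - b - 2, by omega⟩
  simp only [Csq, show b + 1 - 1 = b from by omega,
    show a + b + 2 + (b + 1) - 1 = a+2*b+1+1 from by omega,
    show a + b + 2 - (b + 1) - 1 = a from by omega,
    show a + b + 2 + b - 1 = a+2*b+1 from by omega,
    show a + b + 2 - b - 1 = a+1 from by omega,
    show a + b + 2 + 1 + (b + 1) - 1 = a+2*b+1+1+1 from by omega,
    show a + b + 2 + 1 - (b + 1) - 1 = a+1 from by omega,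
    Nat.factorial_succ]
  push_cast
  have h1 : (b.factorial : ℝ) ≠ 0 := by positivity
  have h2 : (a.factorial : ℝ) ≠ 0 := by positivity
  have h3 : ((a+2*b).factorial : ℝ) ≠ 0 := by positivity
  field_simp
  ring

lemma hasDerivAt_term (f : ℝ → ℝ) (hf : ContDiff ℝ (⊤ : ℕ∞) f) (m : ℕ) (j : ℤ) {x : ℝ} (hx : 0 < x) :
    HasDerivAt (fun t => (2 * Real.sqrt t) ^ j * iteratedDeriv m f (Real.sqrt t))
      ((j : ℝ) * (2 * Real.sqrt x) ^ (j - 1) * (2 * (1 / (2 * Real.sqrt x))) *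
          iteratedDeriv m f (Real.sqrt x)
        + (2 * Real.sqrt x) ^ j *
          (iteratedDeriv (m + 1) f (Real.sqrt x) * (1 / (2 * Real.sqrt x)))) x := by
  have hs : HasDerivAt Real.sqrt (1 / (2 * Real.sqrt x)) x := Real.hasDerivAt_sqrt hx.ne'
  have h2s : HasDerivAt (fun t => 2 * Real.sqrt t) (2 * (1 / (2 * Real.sqrt x))) x :=
    hs.const_mul 2
  have hne : (2 * Real.sqrt x) ≠ 0 := by positivity
  have hp : HasDerivAt (fun t => (2 * Real.sqrt t) ^ j)
      ((j : ℝ) * (2 * Real.sqrt x) ^ (j - 1) * (2 * (1 / (2 * Real.sqrt x)))) x := by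
    have := (hasDerivAt_zpow j (2 * Real.sqrt x) (Or.inl hne)).comp x h2s
    simpa [Function.comp_def] using this
  have hF : HasDerivAt (fun t => iteratedDeriv m f (Real.sqrt t))
      (iteratedDeriv (m + 1) f (Real.sqrt x) * (1 / (2 * Real.sqrt x))) x := by
    have hd : HasDerivAt (iteratedDeriv m f) (iteratedDeriv (m + 1) f (Real.sqrt x))
        (Real.sqrt x) := by
      have h1 : DifferentiableAt ℝ (iteratedDeriv m f) (Real.sqrt x) :=
        (hf.differentiable_iteratedDeriv m (by exact_mod_cast ENat.coe_lt_top m)) _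
      rw [iteratedDeriv_succ]
      exact h1.hasDerivAt
    have := hd.comp x hs
    simpa [Function.comp_def] using this
  exact hp.mul hF

lemma key (f : ℝ → ℝ) (hf : ContDiff ℝ (⊤ : ℕ∞) f) (n : ℕ) (hn : 1 ≤ n) :
    ∀ x : ℝ, 0 < x →
    iteratedDeriv n (fun t => f (Real.sqrt t)) x =
      ∑ k ∈ Finset.range n, Csq n k * (2 * Real.sqrt x) ^ (-(n + k : ℤ)) *
        iteratedDeriv (n - k) f (Real.sqrt x) := by
  induction n, hn using Nat.le_induction with
  | base =>
    intro x hx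
    have hs : HasDerivAt Real.sqrt (1 / (2 * Real.sqrt x)) x := Real.hasDerivAt_sqrt hx.ne'
    have hd : HasDerivAt f (deriv f (Real.sqrt x)) (Real.sqrt x) :=
      ((hf.differentiable (by simp)) _).hasDerivAt
    have H : HasDerivAt (fun t => f (Real.sqrt t))
        (deriv f (Real.sqrt x) * (1 / (2 * Real.sqrt x))) x := by
      simpa [Function.comp_def] using hd.comp x hs
    have hu : (2 * Real.sqrt x) ≠ 0 := by positivity
    rw [iteratedDeriv_one, H.deriv]
    simp [Finset.sum_range_one, Csq, iteratedDeriv_one, zpow_neg]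
    field_simp
  | succ n hn ih =>
    intro x hx
    rw [iteratedDeriv_succ]
    have hev : deriv (iteratedDeriv n (fun t => f (Real.sqrt t))) x =
        deriv (fun t => ∑ k ∈ Finset.range n,
          Csq n k * ((2 * Real.sqrt t) ^ (-(n + k : ℤ)) *
            iteratedDeriv (n - k) f (Real.sqrt t))) x := by
      apply Filter.EventuallyEq.deriv_eq
      filter_upwards [isOpen_Ioi.mem_nhds hx] with y hy
      rw [ih y hy]
      exact Finset.sum_congr rfl fun k _ => mul_assoc _ _ _
    rw [hev]
    have H : HasDerivAt (fun t => ∑ k ∈ Finset.range n,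
        Csq n k * ((2 * Real.sqrt t) ^ (-(n + k : ℤ)) * iteratedDeriv (n - k) f (Real.sqrt t)))
        (∑ k ∈ Finset.range n, Csq n k *
          ((Int.cast (-(n + k : ℤ)) : ℝ) * (2 * Real.sqrt x) ^ (-(n + k : ℤ) - 1) *
              (2 * (1 / (2 * Real.sqrt x))) * iteratedDeriv (n - k) f (Real.sqrt x)
            + (2 * Real.sqrt x) ^ (-(n + k : ℤ)) *
              (iteratedDeriv (n - k + 1) f (Real.sqrt x) * (1 / (2 * Real.sqrt x))))) x :=
      HasDerivAt.fun_sum fun k _ => (hasDerivAt_term f hf (n - k) (-(n + k : ℤ)) hx).const_mul _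
    rw [H.deriv]
    -- algebra
    have hu : (2 * Real.sqrt x) ≠ 0 := by positivity
    set u := 2 * Real.sqrt x with hu_def
    set F : ℕ → ℝ := fun m => iteratedDeriv m f (Real.sqrt x) with hF_def
    set P : ℕ → ℝ := fun k =>
      if k = n then 0 else Csq n k * u ^ (-(n : ℤ) - 1 - k) * F (n + 1 - k) with hP_def
    set Q : ℕ → ℝ := fun k =>
      if k = 0 then 0 else
        (-2 : ℝ) * ((n : ℝ) + k - 1) * Csq n (k - 1) * u ^ (-(n : ℤ) - 1 - k) * F (n + 1 - k)
      with hQ_def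
    have step1 : (∑ k ∈ Finset.range n, Csq n k *
          ((Int.cast (-(n + k : ℤ)) : ℝ) * u ^ (-(n + k : ℤ) - 1) * (2 * (1 / u)) * F (n - k)
            + u ^ (-(n + k : ℤ)) * (F (n - k + 1) * (1 / u))))
        = ∑ k ∈ Finset.range n, (P k + Q (k + 1)) := by
      refine Finset.sum_congr rfl fun k hk => ?_
      rw [Finset.mem_range] at hk
      have hz1 : u ^ (-(n + k : ℤ) - 1) = u ^ (-(n + k : ℤ)) * u⁻¹ := zpow_sub_one₀ hu _
      have hz2 : u ^ (-(n : ℤ) - 1 - (k : ℤ)) = u ^ (-(n + k : ℤ)) * u⁻¹ := by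
        rw [show (-(n : ℤ) - 1 - (k : ℤ)) = -(n + k : ℤ) - 1 from by ring, zpow_sub_one₀ hu]
      have hz3 : u ^ (-(n : ℤ) - 1 - ((k : ℤ) + 1)) = u ^ (-(n + k : ℤ)) * u⁻¹ * u⁻¹ := by
        rw [show (-(n : ℤ) - 1 - ((k : ℤ) + 1)) = -(n + k : ℤ) - 1 - 1 from by ring,
          zpow_sub_one₀ hu, zpow_sub_one₀ hu]
      rw [hP_def, hQ_def]
      simp only [if_neg hk.ne, if_neg (Nat.succ_ne_zero k), Nat.add_sub_cancel,
        show n + 1 - (k + 1) = n - k from by omega, show n + 1 - k = n - k + 1 from by omega]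
      push_cast
      rw [hz1, hz2, hz3]
      field_simp
      ring
    rw [step1, Finset.sum_add_distrib]
    have step2 : ∑ k ∈ Finset.range n, P k = ∑ k ∈ Finset.range (n + 1), P k := by
      rw [Finset.sum_range_succ, hP_def]
      simp
    have step3 : ∑ k ∈ Finset.range n, Q (k + 1) = ∑ k ∈ Finset.range (n + 1), Q k := by
      rw [Finset.sum_range_succ' Q n, hQ_def]
      simp
    rw [step2, step3, ← Finset.sum_add_distrib]
    refine Finset.sum_congr rfl fun k hk => ?_
    rw [Finset.mem_range] at hk
    have hexp : (-(n : ℤ) - 1 - (k : ℤ)) = -(((n : ℕ) + 1 : ℕ) + k : ℤ) := by push_cast; ring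
    rcases Nat.eq_zero_or_pos k with rfl | hkpos
    · rw [hP_def, hQ_def]
      simp only [if_pos rfl, if_neg (by omega : (0 : ℕ) ≠ n), add_zero]
      rw [Csq_zero hn, Csq_zero (by omega : 1 ≤ n + 1), hexp]
      simp [hF_def]
    · rcases eq_or_lt_of_le (Nat.lt_succ_iff.mp hk) with rfl | hklt
      · rw [hP_def, hQ_def]
        simp only [if_pos rfl, if_neg (by omega : ¬ k = 0), zero_add]
        rw [← Csq_last hn, hexp]
        simp [hF_def]
      · rw [hP_def, hQ_def]
        simp only [if_neg hklt.ne, if_neg (by omega : ¬ k = 0)]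
        rw [← Csq_mid hkpos hklt, hexp]
        ring

theorem iteratedDerivWithin_comp_sqrt (f : ℝ → ℝ) (hf : ContDiff ℝ (⊤ : ℕ∞) f)
    (n : ℕ) (hn : 1 ≤ n) (x : ℝ) (hx : 0 < x) :
    iteratedDerivWithin n (fun t => f (Real.sqrt t)) (Set.Ioi 0) x =
      ∑ k ∈ Finset.range n,
        (-1 : ℝ) ^ k * ((n + k - 1).factorial : ℝ) /
            ((k.factorial : ℝ) * (n - k - 1).factorial) *
          (2 * Real.sqrt x) ^ (-(n + k : ℤ)) *
          iteratedDeriv (n - k) f (Real.sqrt x) := by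
  have h1 : iteratedDerivWithin n (fun t => f (Real.sqrt t)) (Set.Ioi 0) x =
      iteratedDeriv n (fun t => f (Real.sqrt t)) x := by
    rw [iteratedDerivWithin, iteratedDeriv, iteratedFDerivWithin_of_isOpen n isOpen_Ioi hx]
  rw [h1, key f hf n hn x hx]
  rfl
end

section
/- For all real x, y, t with |y t| < 1, the generating function of the two-variable Laguerre polynomials satisfies Σ_{n=0}^{∞} tⁿ · L_n(x, y) = (1 − y t)^{−1} · exp(−x t / (1 − y t)), the series on the left converging. -/
/-!
Since `n! / ((n-k)! (k!)²) = C(n, k) / k!`, the series `Σ tⁿ Lₙ(x, y)` is the diagonal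
rearrangement of the double series `Σ_{k,m} C(k+m, k) sᵏ rᵐ / k!` with `s = -x t`, `r = y t`.
Summing over `m` first gives `Σₘ C(k+m, k) rᵐ = (1 - r)^{-(k+1)}`, and then summing over `k`
gives `(1 - r)⁻¹ exp (s / (1 - r))`. The same computation with `|s|`, `|r|` shows that the
double series converges absolutely for `|r| < 1`, which justifies both rearrangements.
-/

open Finset

/-- The two-variable Laguerre polynomials. -/
noncomputable def laguerre2 (n : ℕ) (x y : ℝ) : ℝ :=
  (n.factorial : ℝ) * ∑ k ∈ Finset.range (n + 1),
    (-1 : ℝ) ^ k * x ^ k * y ^ (n - k) /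
      (((n - k).factorial : ℝ) * (k.factorial : ℝ) ^ 2)

theorem HasSum.sum_antidiagonal {α A : Type*} [AddCommMonoid α] [TopologicalSpace α]
    [ContinuousAdd α] [RegularSpace α] [AddCommMonoid A] [HasAntidiagonal A]
    {f : A × A → α} {a : α} (hf : HasSum f a) :
    HasSum (fun n ↦ ∑ p ∈ antidiagonal n, f p) a :=
  (HasAntidiagonal.sigmaAntidiagonalEquivProd.hasSum_iff.2 hf).sigma fun n ↦ by
    simpa [sum_attach] using hasSum_fintype fun p : antidiagonal n ↦ f p

noncomputable def laguerreDoubleSeries (s r : ℝ) (p : ℕ × ℕ) : ℝ :=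
  s ^ p.1 / p.1.factorial * ((p.2 + p.1).choose p.1 * r ^ p.2)

theorem abs_laguerreDoubleSeries (s r : ℝ) (p : ℕ × ℕ) :
    |laguerreDoubleSeries s r p| = laguerreDoubleSeries |s| |r| p := by
  simp [laguerreDoubleSeries, abs_mul, abs_div, abs_pow]

theorem hasSum_laguerreDoubleSeries_fiber (s : ℝ) {r : ℝ} (hr : |r| < 1) (k : ℕ) :
    HasSum (fun m ↦ laguerreDoubleSeries s r (k, m))
      (s ^ k / k.factorial * ((1 - r) ^ (k + 1))⁻¹) := by
  rw [← one_div]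
  exact (hasSum_choose_mul_geometric_of_norm_lt_one k hr).mul_left (s ^ k / k.factorial)

theorem hasSum_pow_div_factorial_mul_inv_pow_succ (s r : ℝ) :
    HasSum (fun k : ℕ ↦ s ^ k / k.factorial * ((1 - r) ^ (k + 1))⁻¹)
      ((1 - r)⁻¹ * Real.exp (s / (1 - r))) := by
  rw [Real.exp_eq_exp_ℝ]
  refine ((NormedSpace.expSeries_div_hasSum_exp (s / (1 - r))).mul_left (1 - r)⁻¹).congr_fun
    fun k ↦ ?_
  rw [div_pow, pow_succ, mul_inv]
  ring

theorem summable_laguerreDoubleSeries (s : ℝ) {r : ℝ} (hr : |r| < 1) :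
    Summable (laguerreDoubleSeries s r) := by
  have hr' : |(|r|)| < 1 := by rwa [abs_abs]
  refine Summable.of_abs ?_
  simp only [abs_laguerreDoubleSeries]
  refine (summable_prod_of_nonneg fun p ↦ ?_).2
    ⟨fun k ↦ (hasSum_laguerreDoubleSeries_fiber |s| hr' k).summable, ?_⟩
  · simp only [Pi.zero_apply, laguerreDoubleSeries]
    positivity
  · simp only [fun k ↦ (hasSum_laguerreDoubleSeries_fiber |s| hr' k).tsum_eq]
    exact (hasSum_pow_div_factorial_mul_inv_pow_succ |s| |r|).summable

theorem hasSum_laguerreDoubleSeries (s : ℝ) {r : ℝ} (hr : |r| < 1) :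
    HasSum (laguerreDoubleSeries s r) ((1 - r)⁻¹ * Real.exp (s / (1 - r))) := by
  have hF := (summable_laguerreDoubleSeries s hr).hasSum
  rwa [(hF.prod_fiberwise (hasSum_laguerreDoubleSeries_fiber s hr)).unique
    (hasSum_pow_div_factorial_mul_inv_pow_succ s r)] at hF

theorem pow_mul_laguerre2_eq_sum_antidiagonal (n : ℕ) (x y t : ℝ) :
    t ^ n * laguerre2 n x y =
      ∑ p ∈ antidiagonal n, laguerreDoubleSeries (-(x * t)) (y * t) p := by
  rw [Nat.sum_antidiagonal_eq_sum_range_succ_mk, laguerre2, mul_sum, mul_sum]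
  refine sum_congr rfl fun k hk ↦ ?_
  have hkn : k ≤ n := Nat.lt_succ_iff.mp (mem_range.mp hk)
  rw [laguerreDoubleSeries, Nat.sub_add_cancel hkn, Nat.cast_choose ℝ hkn,
    ← pow_mul_pow_sub t hkn]
  field_simp
  ring

theorem laguerre2_generating_function (x y t : ℝ) (h : |y * t| < 1) :
    HasSum (fun n : ℕ => t ^ n * laguerre2 n x y)
      ((1 - y * t)⁻¹ * Real.exp (-(x * t) / (1 - y * t))) := by
  simpa only [pow_mul_laguerre2_eq_sum_antidiagonal] using
    (hasSum_laguerreDoubleSeries (-(x * t)) h).sum_antidiagonal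
end

section
/- For every natural number n ≥ 1 and all real ξ, c, the polynomial identity L_n(ξ² c, −ξ) + ξ · L_{n−1}(ξ² c, −ξ) = ((−1)ⁿ / n) · Σ_{k=0}^{n−1} C(n, k) · ξ^{2n−k} · c^{n−k} / (n−k−1)! holds. -/
open Finset

/-!
Homogeneity gives `L_n(s y, y) = yⁿ L_n(s)` with `L_n` the classical Laguerre polynomial, so for
`s = -ξc`, `y = -ξ` the left side is `(-ξ)ⁿ (L_n(s) - L_{n-1}(s))`. Pascal's rule turns
`L_n - L_{n-1}` into `∑ C(n-1, j) (-s)^(j+1) / (j+1)!`; reflecting the index and using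
`(j+1) C(n, j+1) = n C(n-1, j)` gives the stated form.
-/

open Nat

section Laguerre

variable {K : Type*} [Field K]

def laguerre (n : ℕ) (x : K) : K :=
  ∑ k ∈ range (n + 1), (n.choose k : K) * ((-x) ^ k / k !)

theorem laguerre_succ_eq_add (m : ℕ) (x : K) :
    laguerre (m + 1) x =
      laguerre m x + ∑ j ∈ range (m + 1), (m.choose j : K) * ((-x) ^ (j + 1) / (j + 1)!) :=
  sum_choose_succ_mul (fun i _ => (-x) ^ i / i !) m

theorem sum_choose_mul_div_factorial_succ [CharZero K] (m : ℕ) (t : K) :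
    ∑ j ∈ range (m + 1), (m.choose j : K) * (t ^ (j + 1) / (j + 1)!) =
      (m + 1 : K)⁻¹ *
        ∑ k ∈ range (m + 1), ((m + 1).choose k : K) * (t ^ (m + 1 - k) / (m - k)!) := by
  conv_rhs => rw [← sum_range_reflect, mul_sum]
  refine sum_congr rfl fun j hj => ?_
  have hjm : j ≤ m := Nat.lt_succ_iff.mp (mem_range.mp hj)
  have h1 : m + 1 - 1 - j = m - j := by omega
  have h2 : m + 1 - (m - j) = j + 1 := by omega
  have h3 : m - (m - j) = j := by omega
  rw [h1, h2, h3, choose_symm_of_eq_add (by omega : m + 1 = (m - j) + (j + 1))]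
  have habsorb : ((m + 1 : ℕ) : K) * m.choose j = (m + 1).choose (j + 1) * (j + 1 : ℕ) := by
    exact_mod_cast add_one_mul_choose_eq m j
  have hj_fact : (j ! : K) ≠ 0 := by exact_mod_cast factorial_ne_zero j
  rw [factorial_succ]
  push_cast at habsorb ⊢
  field_simp
  linear_combination t ^ (j + 1) * habsorb

theorem laguerre_succ_sub_laguerre [CharZero K] (m : ℕ) (x : K) :
    laguerre (m + 1) x - laguerre m x =
      (m + 1 : K)⁻¹ *
        ∑ k ∈ range (m + 1), ((m + 1).choose k : K) * ((-x) ^ (m + 1 - k) / (m - k)!) := by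
  rw [laguerre_succ_eq_add, add_sub_cancel_left, sum_choose_mul_div_factorial_succ]

end Laguerre

theorem laguerre2_mul_right (n : ℕ) (s y : ℝ) :
    laguerre2 n (s * y) y = y ^ n * laguerre n s := by
  rw [laguerre2, laguerre, mul_sum, mul_sum]
  refine sum_congr rfl fun k hk => ?_
  have hkn : k ≤ n := Nat.lt_succ_iff.mp (mem_range.mp hk)
  have hk_fact : (k ! : ℝ) ≠ 0 := by positivity
  have hnk_fact : ((n - k)! : ℝ) ≠ 0 := by positivity
  rw [← choose_mul_factorial_mul_factorial hkn, ← Nat.add_sub_cancel' hkn]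
  simp only [Nat.add_sub_cancel_left]
  push_cast
  field_simp
  ring

theorem laguerre2_combination_eq (n : ℕ) (hn : 1 ≤ n) (ξ c : ℝ) :
    laguerre2 n (ξ ^ 2 * c) (-ξ) + ξ * laguerre2 (n - 1) (ξ ^ 2 * c) (-ξ) =
      (-1 : ℝ) ^ n / (n : ℝ) *
        ∑ k ∈ Finset.range n,
          (n.choose k : ℝ) * ξ ^ (2 * n - k) * c ^ (n - k) /
            ((n - k - 1).factorial : ℝ) := by
  obtain ⟨m, rfl⟩ := Nat.exists_eq_add_of_le' hn
  have hscale : ξ ^ 2 * c = -(ξ * c) * -ξ := by ring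
  have hcombine : ∀ a b : ℝ,
      (-ξ) ^ (m + 1) * a + ξ * ((-ξ) ^ m * b) = (-ξ) ^ (m + 1) * (a - b) :=
    fun a b => by ring
  rw [hscale, Nat.add_sub_cancel, laguerre2_mul_right, laguerre2_mul_right, hcombine,
    laguerre_succ_sub_laguerre, neg_neg, mul_sum, mul_sum, mul_sum]
  refine sum_congr rfl fun k hk => ?_
  have hkm : k ≤ m := Nat.lt_succ_iff.mp (mem_range.mp hk)
  rw [show 2 * (m + 1) - k = (m + 1) + (m + 1 - k) by omega, show m + 1 - k - 1 = m - k by omega,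
    pow_add, neg_pow]
  push_cast
  ring
end

section
/- Let f : ℝ → ℝ be smooth and let T denote the operator (T g)(y) = √y · g′(y) acting on smooth functions on (0, ∞). Then for every n and every y > 0, the n-fold iterate satisfies (Tⁿ f)(y) = Σ_{k=0}^{⌊n/2⌋} S₂^{(1/2)}(n, k) · y^{(n−2k)/2} · f^{(n−k)}(y), where S₂^{(1/2)}(n, k) = n! / (4^k · k! · (n−2k)!). -/
open Finset

noncomputable def coefS (n k : ℕ) : ℝ :=
  (n.factorial : ℝ) / ((4 : ℝ) ^ k * k.factorial * (n - 2 * k).factorial)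

lemma coefS_rec {n j : ℕ} (h : 2 * (j + 1) ≤ n) :
    coefS n j * (((n : ℝ) - 2 * j) / 2) + coefS n (j + 1) = coefS (n + 1) (j + 1) := by
  obtain ⟨d, rfl⟩ : ∃ d, n = d + 2 * (j + 1) := ⟨n - 2 * (j + 1), by omega⟩
  have h1 : d + 2 * (j + 1) - 2 * j = d + 2 := by omega
  have h2 : d + 2 * (j + 1) - 2 * (j + 1) = d := by omega
  have h3 : d + 2 * (j + 1) + 1 - 2 * (j + 1) = d + 1 := by omega
  simp only [coefS, h1, h2, h3]
  have hd2 : (d + 2).factorial = (d + 2) * ((d + 1) * d.factorial) := by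
    rw [show d + 2 = (d + 1) + 1 from rfl, Nat.factorial_succ, Nat.factorial_succ]
  have hd1 : (d + 1).factorial = (d + 1) * d.factorial := Nat.factorial_succ d
  have hj1 : (j + 1).factorial = (j + 1) * j.factorial := Nat.factorial_succ j
  have hN : (d + 2 * (j + 1) + 1).factorial
      = (d + 2 * (j + 1) + 1) * (d + 2 * (j + 1)).factorial := Nat.factorial_succ _
  rw [hd2, hj1, hN, hd1]
  have hfd : (d.factorial : ℝ) ≠ 0 := Nat.cast_ne_zero.mpr d.factorial_ne_zero
  have hfj : (j.factorial : ℝ) ≠ 0 := Nat.cast_ne_zero.mpr j.factorial_ne_zero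
  have hfn : ((d + 2 * (j + 1)).factorial : ℝ) ≠ 0 :=
    Nat.cast_ne_zero.mpr (d + 2 * (j + 1)).factorial_ne_zero
  have h4 : ((4 : ℝ) ^ j) ≠ 0 := by positivity
  push_cast
  field_simp
  ring

lemma coefS_zero (n : ℕ) : coefS n 0 = 1 := by
  simp [coefS, Nat.factorial_ne_zero]

lemma peel (M : ℕ) (A B C : ℕ → ℝ) (h0 : B 0 = C 0)
    (hmid : ∀ k, k < M → A k + B (k + 1) = C (k + 1)) :
    ∑ k ∈ Finset.range (M + 1), A k + ∑ k ∈ Finset.range (M + 1), B k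
      = ∑ k ∈ Finset.range (M + 1), C k + A M := by
  rw [Finset.sum_range_succ A, Finset.sum_range_succ' B, Finset.sum_range_succ' C]
  have h : ∑ k ∈ Finset.range M, A k + ∑ k ∈ Finset.range M, B (k + 1)
      = ∑ k ∈ Finset.range M, C (k + 1) := by
    rw [← Finset.sum_add_distrib]
    exact Finset.sum_congr rfl fun k hk => hmid k (Finset.mem_range.mp hk)
  linarith

lemma step_sum (n : ℕ) (y : ℝ) (g : ℕ → ℝ) :
    ∑ k ∈ Finset.range (n / 2 + 1),
        (coefS n k * (((n : ℝ) - 2 * k) / 2) * y ^ (((n : ℝ) - 2 * k - 1) / 2) * g (n - k)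
          + coefS n k * y ^ (((n : ℝ) - 2 * k + 1) / 2) * g (n + 1 - k))
      = ∑ k ∈ Finset.range ((n + 1) / 2 + 1),
          coefS (n + 1) k * y ^ ((((n : ℝ) + 1) - 2 * k) / 2) * g (n + 1 - k) := by
  set A : ℕ → ℝ := fun k =>
    coefS n k * (((n : ℝ) - 2 * k) / 2) * y ^ (((n : ℝ) - 2 * k - 1) / 2) * g (n - k) with hA
  set B : ℕ → ℝ := fun k =>
    coefS n k * y ^ (((n : ℝ) - 2 * k + 1) / 2) * g (n + 1 - k) with hB
  set C : ℕ → ℝ := fun k =>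
    coefS (n + 1) k * y ^ ((((n : ℝ) + 1) - 2 * k) / 2) * g (n + 1 - k) with hC
  have h0 : B 0 = C 0 := by
    simp only [hA, hB, hC, coefS_zero]
    norm_num
  have hmid : ∀ k, k < n / 2 → A k + B (k + 1) = C (k + 1) := by
    intro k hk
    have hkn : 2 * (k + 1) ≤ n := by omega
    simp only [hA, hB, hC]
    have hg : n + 1 - (k + 1) = n - k := by omega
    have he1 : (((n : ℝ) + 1) - 2 * ((k : ℕ) + 1 : ℕ) ) / 2 = ((n : ℝ) - 2 * k - 1) / 2 := by
      push_cast; ring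
    have he2 : ((n : ℝ) - 2 * ((k : ℕ) + 1 : ℕ) + 1) / 2 = ((n : ℝ) - 2 * k - 1) / 2 := by
      push_cast; ring
    rw [hg, he1, he2, ← coefS_rec hkn]
    ring
  have hsplit : ∑ k ∈ Finset.range (n / 2 + 1), (A k + B k)
      = ∑ k ∈ Finset.range (n / 2 + 1), C k + A (n / 2) := by
    rw [Finset.sum_add_distrib]
    exact peel (n / 2) A B C h0 hmid
  rw [hsplit]
  obtain ⟨m, rfl | rfl⟩ := Nat.even_or_odd' n
  · -- n = 2m even : (n+1)/2 = m = n/2, and A m = 0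
    have hm1 : 2 * m / 2 = m := by omega
    have hm2 : (2 * m + 1) / 2 = m := by omega
    rw [hm1, hm2]
    have hAm : A m = 0 := by
      simp only [hA]
      have : ((2 * m : ℕ) : ℝ) - 2 * m = 0 := by push_cast; ring
      rw [this]
      norm_num
    rw [hAm, add_zero]
  · -- n = 2m+1 odd : (n+1)/2 = m+1, and A m = C (m+1)
    have hm1 : (2 * m + 1) / 2 = m := by omega
    have hm2 : (2 * m + 1 + 1) / 2 = m + 1 := by omega
    rw [hm1, hm2]
    have hAm : A m = C (m + 1) := by
      simp only [hA, hC]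
      have hg : 2 * m + 1 - m = 2 * m + 1 + 1 - (m + 1) := by omega
      have he : (((2 * m + 1 : ℕ) : ℝ) - 2 * m - 1) / 2
          = (((2 * m + 1 : ℕ) : ℝ) + 1 - 2 * ((m : ℕ) + 1 : ℕ)) / 2 := by push_cast; ring
      have hco : coefS (2 * m + 1) m * (((2 * m + 1 : ℕ) : ℝ) - 2 * m) / 2
          = coefS (2 * m + 1 + 1) (m + 1) := by
        have h1 : 2 * m + 1 - 2 * m = 1 := by omega
        have h2 : 2 * m + 1 + 1 - 2 * (m + 1) = 0 := by omega
        simp only [coefS, h1, h2]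
        have hj1 : (m + 1).factorial = (m + 1) * m.factorial := Nat.factorial_succ m
        have hN : (2 * m + 1 + 1).factorial
            = (2 * m + 1 + 1) * (2 * m + 1).factorial := Nat.factorial_succ _
        rw [hj1, hN]
        have hfm : (m.factorial : ℝ) ≠ 0 := Nat.cast_ne_zero.mpr m.factorial_ne_zero
        have hfn : ((2 * m + 1).factorial : ℝ) ≠ 0 :=
          Nat.cast_ne_zero.mpr (2 * m + 1).factorial_ne_zero
        have h4 : ((4 : ℝ) ^ m) ≠ 0 := by positivity
        push_cast
        field_simp
        ring
      rw [hg, he, ← hco]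
      ring
    rw [hAm, Finset.sum_range_succ C (m + 1)]

theorem iterate_sqrt_mul_deriv (f : ℝ → ℝ) (hf : ContDiff ℝ (⊤ : ℕ∞) f)
    (T : (ℝ → ℝ) → (ℝ → ℝ)) (hT : ∀ g : ℝ → ℝ, ∀ y : ℝ, T g y = Real.sqrt y * deriv g y)
    (n : ℕ) (y : ℝ) (hy : 0 < y) :
    (T^[n] f) y =
      ∑ k ∈ Finset.range (n / 2 + 1),
        ((n.factorial : ℝ) / ((4 : ℝ) ^ k * k.factorial * (n - 2 * k).factorial)) *
          y ^ (((n : ℝ) - 2 * (k : ℝ)) / 2) * iteratedDeriv (n - k) f y := by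
  have hder : ∀ p : ℕ, ∀ x : ℝ, HasDerivAt (iteratedDeriv p f) (iteratedDeriv (p + 1) f x) x := by
    intro p x
    have h := (hf.differentiable_iteratedDeriv p (by exact_mod_cast ENat.coe_lt_top p)).differentiableAt (x := x)
    simpa [iteratedDeriv_succ] using h.hasDerivAt
  suffices H : ∀ m : ℕ, ∀ z : ℝ, 0 < z →
      (T^[m] f) z = ∑ k ∈ Finset.range (m / 2 + 1),
        coefS m k * z ^ (((m : ℝ) - 2 * (k : ℝ)) / 2) * iteratedDeriv (m - k) f z by
    simpa [coefS] using H n y hy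
  intro m
  induction m with
  | zero =>
    intro z hz
    simp [coefS]
  | succ n ih =>
    intro z hz
    rw [Function.iterate_succ_apply', hT]
    have hevd : deriv (T^[n] f) z
        = ∑ k ∈ Finset.range (n / 2 + 1),
            (coefS n k * ((((n : ℝ) - 2 * k) / 2) * z ^ (((n : ℝ) - 2 * k) / 2 - 1))
                * iteratedDeriv (n - k) f z
              + coefS n k * z ^ (((n : ℝ) - 2 * k) / 2) * iteratedDeriv (n - k + 1) f z) := by
      have h1 : (T^[n] f) =ᶠ[nhds z] fun x =>
          ∑ k ∈ Finset.range (n / 2 + 1),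
            coefS n k * x ^ (((n : ℝ) - 2 * (k : ℝ)) / 2) * iteratedDeriv (n - k) f x := by
        filter_upwards [Ioi_mem_nhds hz] with x hx
        exact ih x hx
      rw [h1.deriv_eq]
      have hD : ∀ k ∈ Finset.range (n / 2 + 1),
          HasDerivAt (fun x : ℝ => coefS n k * x ^ (((n : ℝ) - 2 * (k : ℝ)) / 2)
              * iteratedDeriv (n - k) f x)
            (coefS n k * ((((n : ℝ) - 2 * k) / 2) * z ^ (((n : ℝ) - 2 * k) / 2 - 1))
                * iteratedDeriv (n - k) f z
              + coefS n k * z ^ (((n : ℝ) - 2 * k) / 2) * iteratedDeriv (n - k + 1) f z) z := by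
        intro k _
        have h1 : HasDerivAt (fun x : ℝ => x ^ (((n : ℝ) - 2 * k) / 2))
            ((((n : ℝ) - 2 * k) / 2) * z ^ (((n : ℝ) - 2 * k) / 2 - 1)) z :=
          Real.hasDerivAt_rpow_const (Or.inl hz.ne')
        exact (h1.const_mul (coefS n k)).mul (hder (n - k) z)
      exact (HasDerivAt.fun_sum hD).deriv
    rw [hevd, Finset.mul_sum]
    have hterm : ∀ k ∈ Finset.range (n / 2 + 1),
        Real.sqrt z *
          (coefS n k * ((((n : ℝ) - 2 * k) / 2) * z ^ (((n : ℝ) - 2 * k) / 2 - 1))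
              * iteratedDeriv (n - k) f z
            + coefS n k * z ^ (((n : ℝ) - 2 * k) / 2) * iteratedDeriv (n - k + 1) f z)
        = coefS n k * (((n : ℝ) - 2 * k) / 2) * z ^ (((n : ℝ) - 2 * k - 1) / 2)
              * iteratedDeriv (n - k) f z
          + coefS n k * z ^ (((n : ℝ) - 2 * k + 1) / 2) * iteratedDeriv (n + 1 - k) f z := by
      intro k hk
      have hkn : k ≤ n := by
        have := Finset.mem_range.mp hk
        omega
      have hg : n - k + 1 = n + 1 - k := by omega
      have hsq : Real.sqrt z = z ^ ((1 : ℝ) / 2) := Real.sqrt_eq_rpow z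
      have hmul1 : z ^ ((1 : ℝ) / 2) * z ^ (((n : ℝ) - 2 * k) / 2 - 1)
          = z ^ (((n : ℝ) - 2 * k - 1) / 2) := by
        rw [← Real.rpow_add hz]
        norm_num
        ring_nf
      have hmul2 : z ^ ((1 : ℝ) / 2) * z ^ (((n : ℝ) - 2 * k) / 2)
          = z ^ (((n : ℝ) - 2 * k + 1) / 2) := by
        rw [← Real.rpow_add hz]
        ring_nf
      rw [hg, hsq, mul_add]
      rw [show z ^ ((1:ℝ)/2) * (coefS n k * ((((n : ℝ) - 2 * k) / 2) * z ^ (((n : ℝ) - 2 * k) / 2 - 1))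
              * iteratedDeriv (n - k) f z)
          = coefS n k * (((n : ℝ) - 2 * k) / 2)
              * (z ^ ((1:ℝ)/2) * z ^ (((n : ℝ) - 2 * k) / 2 - 1)) * iteratedDeriv (n - k) f z by ring,
        show z ^ ((1:ℝ)/2) * (coefS n k * z ^ (((n : ℝ) - 2 * k) / 2) * iteratedDeriv (n + 1 - k) f z)
          = coefS n k * (z ^ ((1:ℝ)/2) * z ^ (((n : ℝ) - 2 * k) / 2)) * iteratedDeriv (n + 1 - k) f z by ring,
        hmul1, hmul2]
    rw [Finset.sum_congr rfl hterm, step_sum n z (fun j => iteratedDeriv j f z)]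
    apply Finset.sum_congr rfl
    intro k _
    have : (((n + 1 : ℕ) : ℝ)) = (n : ℝ) + 1 := by push_cast; ring
    rw [this]
end

section
/- Let f : ℝ → ℝ be smooth and let T denote the operator (T g)(z) = g′(z)/z acting on smooth functions on (0, ∞). Then for every n ≥ 1 and every z > 0, the n-fold iterate satisfies (Tⁿ f)(z) = Σ_{k=0}^{n−1} S₂^{(−1)}(n, k) · z^{−n−k} · f^{(n−k)}(z), where S₂^{(−1)}(n, k) = (−1)^k (n+k−1)! / (2^k · k! · (n−k−1)!). -/
open Finset

noncomputable def A (n k : ℕ) : ℝ :=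
  (-1 : ℝ) ^ k * ((n + k - 1).factorial : ℝ) /
    ((2 : ℝ) ^ k * k.factorial * (n - k - 1).factorial)

lemma A_zero (n : ℕ) : A (n + 1) 0 = 1 := by
  unfold A
  norm_num
  exact Nat.factorial_ne_zero _

lemma A_rec1 (j k : ℕ) :
    A (k + j + 3) (k + 1) = A (k + j + 2) (k + 1) - ((k:ℝ) + j + 2 + k) * A (k + j + 2) k := by
  unfold A
  have e1 : k + j + 3 + (k + 1) - 1 = 2*k + j + 3 := by omega
  have e2 : k + j + 3 - (k + 1) - 1 = j + 1 := by omega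
  have e3 : k + j + 2 + (k + 1) - 1 = 2*k + j + 2 := by omega
  have e4 : k + j + 2 - (k + 1) - 1 = j := by omega
  have e5 : k + j + 2 + k - 1 = 2*k + j + 1 := by omega
  have e6 : k + j + 2 - k - 1 = j + 1 := by omega
  rw [e1, e2, e3, e4, e5, e6]
  have f1 : ((2*k+j+3).factorial : ℝ) = (2*(k:ℝ)+j+3) * (2*k+j+2).factorial := by
    rw [show 2*k+j+3 = (2*k+j+2)+1 from rfl, Nat.factorial_succ]; push_cast; ring
  have f2 : ((2*k+j+2).factorial : ℝ) = (2*(k:ℝ)+j+2) * (2*k+j+1).factorial := by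
    rw [show 2*k+j+2 = (2*k+j+1)+1 from rfl, Nat.factorial_succ]; push_cast; ring
  have f3 : ((j+1).factorial : ℝ) = ((j:ℝ)+1) * j.factorial := by
    rw [Nat.factorial_succ]; push_cast; ring
  have f4 : ((k+1).factorial : ℝ) = ((k:ℝ)+1) * k.factorial := by
    rw [Nat.factorial_succ]; push_cast; ring
  rw [f1, f2, f3, f4]
  have hj : (j.factorial : ℝ) ≠ 0 := Nat.cast_ne_zero.mpr j.factorial_ne_zero
  have hk : (k.factorial : ℝ) ≠ 0 := Nat.cast_ne_zero.mpr k.factorial_ne_zero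
  have hj1f : ((2*k+j+1).factorial : ℝ) ≠ 0 := Nat.cast_ne_zero.mpr (Nat.factorial_ne_zero _)
  have h2 : (2:ℝ)^k ≠ 0 := by positivity
  have hj1 : (j:ℝ)+1 ≠ 0 := by positivity
  have hk1 : (k:ℝ)+1 ≠ 0 := by positivity
  field_simp
  ring

lemma A_rec2 (k : ℕ) :
    A (k + 2) (k + 1) = -((k:ℝ) + 1 + k) * A (k + 1) k := by
  unfold A
  have e1 : k + 2 + (k + 1) - 1 = 2*k + 2 := by omega
  have e2 : k + 2 - (k + 1) - 1 = 0 := by omega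
  have e3 : k + 1 + k - 1 = 2*k := by omega
  have e4 : k + 1 - k - 1 = 0 := by omega
  rw [e1, e2, e3, e4]
  have f1 : ((2*k+2).factorial : ℝ) = (2*(k:ℝ)+2) * ((2*(k:ℝ)+1) * (2*k).factorial) := by
    rw [show 2*k+2 = (2*k+1)+1 from rfl, Nat.factorial_succ,
      show 2*k+1 = (2*k)+1 from rfl, Nat.factorial_succ]; push_cast; ring
  have f2 : ((k+1).factorial : ℝ) = ((k:ℝ)+1) * k.factorial := by
    rw [Nat.factorial_succ]; push_cast; ring
  rw [f1, f2, Nat.factorial_zero]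
  have hk : (k.factorial : ℝ) ≠ 0 := Nat.cast_ne_zero.mpr k.factorial_ne_zero
  have h2 : (2:ℝ)^k ≠ 0 := by positivity
  have hk1 : (k:ℝ)+1 ≠ 0 := by positivity
  field_simp
  ring

theorem iterate_deriv_div_z (f : ℝ → ℝ) (hf : ContDiff ℝ (⊤ : ℕ∞) f)
    (T : (ℝ → ℝ) → (ℝ → ℝ)) (hT : ∀ g : ℝ → ℝ, ∀ z : ℝ, T g z = deriv g z / z)
    (n : ℕ) (hn : 1 ≤ n) (z : ℝ) (hz : 0 < z) :
    (T^[n] f) z =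
      ∑ k ∈ Finset.range n,
        ((-1 : ℝ) ^ k * ((n + k - 1).factorial : ℝ) /
            ((2 : ℝ) ^ k * k.factorial * (n - k - 1).factorial)) *
          z ^ (-(n : ℤ) - (k : ℤ)) * iteratedDeriv (n - k) f z := by
  have hD : ∀ (j : ℕ) (x : ℝ), HasDerivAt (iteratedDeriv j f) (iteratedDeriv (j+1) f x) x := by
    intro j x
    have h1 : DifferentiableAt ℝ (iteratedDeriv j f) x :=
      (hf.differentiable_iteratedDeriv j (by exact_mod_cast WithTop.coe_lt_top _) ).differentiableAt
    have := h1.hasDerivAt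
    rwa [← iteratedDeriv_succ] at this
  -- the sum function
  set S : ℕ → ℝ → ℝ := fun n x => ∑ k ∈ Finset.range n,
      A n k * x ^ (-(n : ℤ) - (k : ℤ)) * iteratedDeriv (n - k) f x with hS
  -- derivative of S n at x > 0
  have hSderiv : ∀ (n : ℕ) (x : ℝ), 0 < x →
      HasDerivAt (S n)
        (∑ k ∈ Finset.range n,
          (A n k * ((((-(n : ℤ) - (k : ℤ)) : ℤ) : ℝ) * x ^ (-(n : ℤ) - (k : ℤ) - 1)) * iteratedDeriv (n - k) f x
            + A n k * x ^ (-(n : ℤ) - (k : ℤ)) * iteratedDeriv (n - k + 1) f x)) x := by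
    intro n x hx
    apply HasDerivAt.fun_sum
    intro k hk
    have h1 : HasDerivAt (fun y : ℝ => A n k * y ^ (-(n : ℤ) - (k : ℤ)))
        (A n k * ((((-(n : ℤ) - (k : ℤ)) : ℤ) : ℝ) * x ^ (-(n : ℤ) - (k : ℤ) - 1))) x :=
      (hasDerivAt_zpow _ x (Or.inl hx.ne')).const_mul _
    exact h1.mul (hD (n - k) x)
  -- main claim by induction
  have key : ∀ m : ℕ, ∀ x : ℝ, 0 < x → (T^[m+1] f) x = S (m+1) x := by
    intro m
    induction m with
    | zero =>
      intro x hx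
      rw [Function.iterate_one, hT, hS]
      simp only []
      rw [show (0:ℕ)+1 = 1 from rfl, Finset.sum_range_one]
      norm_num [A, iteratedDeriv_one]
      rw [div_eq_inv_mul]
    | succ m ih =>
      intro x hx
      rw [Function.iterate_succ_apply', hT]
      have hev : (T^[m+1] f) =ᶠ[nhds x] S (m+1) := by
        filter_upwards [isOpen_Ioi.mem_nhds (Set.mem_Ioi.mpr hx)] with y hy
        exact ih y hy
      rw [hev.deriv_eq, (hSderiv (m+1) x hx).deriv]
      have hx' : x ≠ 0 := ne_of_gt hx
      set X : ℕ → ℝ := fun k => x ^ (-(m : ℤ) - 2 - (k:ℤ)) * iteratedDeriv (m + 2 - k) f x with hX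
      have l1 : ∀ (a d : ℝ) (p : ℤ), a * x ^ p * d / x = a * (x ^ (p-1) * d) := fun a d p => by
        rw [zpow_sub_one₀ hx' p, div_eq_mul_inv]; ring
      have l2 : ∀ (a c d : ℝ) (p : ℤ), a * (c * x ^ p) * d / x = (a * c) * (x ^ (p-1) * d) :=
        fun a c d p => by
        rw [zpow_sub_one₀ hx' p, div_eq_mul_inv]; ring
      have step1 : (∑ k ∈ Finset.range (m+1),
          (A (m+1) k * ((((-((m+1 : ℕ) : ℤ) - (k:ℤ)) : ℤ) : ℝ) * x ^ (-((m+1 : ℕ) : ℤ) - (k:ℤ) - 1)) * iteratedDeriv (m+1-k) f x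
            + A (m+1) k * x ^ (-((m+1 : ℕ) : ℤ) - (k:ℤ)) * iteratedDeriv (m+1-k+1) f x)) / x
          = ∑ k ∈ Finset.range (m+1), (A (m+1) k * (-(m:ℝ)-1-(k:ℝ))) * X (k+1)
            + ∑ k ∈ Finset.range (m+1), A (m+1) k * X k := by
        rw [Finset.sum_div, ← Finset.sum_add_distrib]
        refine Finset.sum_congr rfl fun k hk => ?_
        have hk' := Finset.mem_range.mp hk
        have e1 : m + 1 - k = m + 2 - (k+1) := by omega
        have e2 : m + 1 - k + 1 = m + 2 - k := by omega
        rw [e2, e1]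
        rw [add_div, l2, l1]
        rw [show (-((m+1 : ℕ) : ℤ) - (k:ℤ) - 1 - 1) = -(m:ℤ) - 2 - (((k:ℕ)+1 : ℕ):ℤ) by push_cast; ring,
          show (-((m+1 : ℕ) : ℤ) - (k:ℤ) - 1) = -(m:ℤ) - 2 - (k:ℤ) by push_cast; ring]
        simp only [hX]
        push_cast
        ring
      have hRHS : S (m+1+1) x = ∑ k ∈ Finset.range (m+2), A (m+2) k * X k := by
        rw [hS]
        refine Finset.sum_congr rfl fun k hk => ?_
        rw [hX]
        simp only []
        rw [show (-((m+1+1 : ℕ) : ℤ) - (k:ℤ)) = -(m:ℤ) - 2 - (k:ℤ) by push_cast; ring]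
        ring
      rw [step1, hRHS, Finset.sum_range_succ' (fun k => A (m+2) k * X k) (m+1),
        Finset.sum_range_succ' (fun k => A (m+1) k * X k) m,
        Finset.sum_range_succ (fun k => A (m+2) (k+1) * X (k+1)) m,
        Finset.sum_range_succ (fun k => (A (m+1) k * (-(m:ℝ)-1-(k:ℝ))) * X (k+1)) m]
      have hA0 : A (m+2) 0 = A (m+1) 0 := by rw [A_zero, A_zero]
      have hAm : A (m+2) (m+1) = A (m+1) m * (-(m:ℝ)-1-(m:ℝ)) := by
        rw [show m+2 = m+1+1 from rfl, A_rec2 m]; ring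
      have hmerge : ∑ k ∈ Finset.range m, A (m+2) (k+1) * X (k+1)
          = ∑ k ∈ Finset.range m, ((A (m+1) k * (-(m:ℝ)-1-(k:ℝ))) * X (k+1) + A (m+1) (k+1) * X (k+1)) := by
        refine Finset.sum_congr rfl fun k hk => ?_
        have hk' := Finset.mem_range.mp hk
        obtain ⟨j, hj⟩ : ∃ j, m = k + j + 1 := ⟨m - k - 1, by omega⟩
        rw [show m+2 = k+j+3 by omega, show m+1 = k+j+2 by omega, A_rec1 j k]
        have : -(m:ℝ) - 1 - (k:ℝ) = -((k:ℝ) + j + 2 + k) := by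
          rw [hj]; push_cast; ring
        rw [this]
        ring
      rw [hmerge, Finset.sum_add_distrib, hA0, hAm]
      ring
  have := key (n-1) z hz
  rw [Nat.sub_add_cancel hn] at this
  rw [this, hS]
  simp [A]
end

section
/- Let a, b be real numbers and c > 0. Then for every natural number n, ∫_{−∞}^{∞} H_{2n}^{(2)}(a x, b) · e^{−c x²} dx = ((2n)! / n!) · √(π/c) · (a²/(4c) + b)ⁿ, and ∫_{−∞}^{∞} H_{2n+1}^{(2)}(a x, b) · e^{−c x²} dx = 0. -/
open Finset MeasureTheory Real

lemma myGamma_nat_add_half (m : ℕ) :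
    Real.Gamma ((m : ℝ) + 1 / 2) =
      Real.sqrt π * (2 * m).factorial / (4 ^ m * m.factorial) := by
  induction m with
  | zero =>
    norm_num
    exact Real.Gamma_one_half_eq
  | succ m ih =>
    have h1 : ((m + 1 : ℕ) : ℝ) + 1 / 2 = ((m : ℝ) + 1 / 2) + 1 := by push_cast; ring
    have h2 : ((m : ℝ) + 1 / 2) ≠ 0 := by positivity
    rw [h1, Real.Gamma_add_one h2, ih]
    have h3 : (2 * (m + 1)) = (2 * m + 1) + 1 := by ring
    rw [h3, Nat.factorial_succ, Nat.factorial_succ, Nat.factorial_succ]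
    have h4 : (4 : ℝ) ^ m ≠ 0 := by positivity
    have h5 : (m.factorial : ℝ) ≠ 0 := Nat.cast_ne_zero.mpr m.factorial_ne_zero
    push_cast
    field_simp
    ring

lemma my_integrable_pow_gaussian {c : ℝ} (hc : 0 < c) (j : ℕ) :
    Integrable fun x : ℝ => x ^ j * Real.exp (-c * x ^ 2) := by
  rw [← integrableOn_univ, ← @Set.Iio_union_Ici _ _ (0 : ℝ), integrableOn_union,
    integrableOn_Ici_iff_integrableOn_Ioi]
  have hIoi : IntegrableOn (fun x : ℝ => x ^ j * Real.exp (-c * x ^ 2)) (Set.Ioi 0) := by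
    apply (integrableOn_rpow_mul_exp_neg_mul_sq hc (s := (j : ℝ)) (lt_of_lt_of_le neg_one_lt_zero (Nat.cast_nonneg j))).congr_fun
      _ measurableSet_Ioi
    intro x hx
    simp [Real.rpow_natCast]
  refine ⟨?_, hIoi⟩
  rw [← Measure.map_neg_eq_self (volume : Measure ℝ)]
  have m : MeasurableEmbedding fun x : ℝ => -x := (Homeomorph.neg ℝ).measurableEmbedding
  rw [m.integrableOn_map_iff]
  have : ((fun x : ℝ => x ^ j * Real.exp (-c * x ^ 2)) ∘ fun x : ℝ => -x) =
      fun x : ℝ => (-1 : ℝ) ^ j * (x ^ j * Real.exp (-c * x ^ 2)) := by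
    funext x
    show (-x) ^ j * Real.exp (-c * (-x) ^ 2) = _
    rw [neg_pow, neg_sq]
    ring
  rw [this]
  simp only [Set.neg_preimage, Set.neg_Iio, neg_zero]
  exact hIoi.const_mul _

lemma my_integral_even_moment {c : ℝ} (hc : 0 < c) (m : ℕ) :
    ∫ x : ℝ, x ^ (2 * m) * Real.exp (-c * x ^ 2) =
      Real.sqrt (π / c) * (2 * m).factorial / (m.factorial * (4 * c) ^ m) := by
  have heq : (fun x : ℝ => x ^ (2 * m) * Real.exp (-c * x ^ 2)) =
      fun x : ℝ => |x| ^ (2 * m) * Real.exp (-c * |x| ^ 2) := by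
    funext x
    rw [pow_mul, pow_mul, sq_abs]
  rw [heq, integral_comp_abs (f := fun t : ℝ => t ^ (2 * m) * Real.exp (-c * t ^ 2))]
  have h1 : ∫ x in Set.Ioi (0 : ℝ), x ^ (2 * m) * Real.exp (-c * x ^ 2) =
      c ^ (-(((2 * m : ℕ) : ℝ) + 1) / 2) * (1 / 2) *
        Real.Gamma ((((2 * m : ℕ) : ℝ) + 1) / 2) := by
    rw [← integral_rpow_mul_exp_neg_mul_rpow (p := 2) two_pos
      (lt_of_lt_of_le neg_one_lt_zero (Nat.cast_nonneg _)) hc]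
    refine setIntegral_congr_fun measurableSet_Ioi fun x hx => ?_
    rw [Real.rpow_natCast, Real.rpow_two]
  rw [h1]
  have h2 : (((2 * m : ℕ) : ℝ) + 1) / 2 = (m : ℝ) + 1 / 2 := by push_cast; ring
  rw [h2, myGamma_nat_add_half]
  have h3 : c ^ (-(((2 * m : ℕ) : ℝ) + 1) / 2) = 1 / (c ^ m * Real.sqrt c) := by
    rw [show (-(((2 * m : ℕ) : ℝ) + 1) / 2) = -((m : ℝ) + 1 / 2) by push_cast; ring,
      Real.rpow_neg hc.le, Real.rpow_add hc, Real.rpow_natCast,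
      ← Real.sqrt_eq_rpow]
    rw [one_div]
  rw [h3, Real.sqrt_div pi_pos.le, mul_pow]
  have hs : Real.sqrt c ≠ 0 := Real.sqrt_ne_zero'.mpr hc
  have hcm : (c : ℝ) ^ m ≠ 0 := pow_ne_zero _ hc.ne'
  have hf : (m.factorial : ℝ) ≠ 0 := Nat.cast_ne_zero.mpr m.factorial_ne_zero
  field_simp

lemma my_integral_odd_moment (c : ℝ) (m : ℕ) :
    ∫ x : ℝ, x ^ (2 * m + 1) * Real.exp (-c * x ^ 2) = 0 := by
  have h := (Measure.measurePreserving_neg (volume : Measure ℝ)).integral_comp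
    (Homeomorph.neg ℝ).measurableEmbedding
    (fun x : ℝ => x ^ (2 * m + 1) * Real.exp (-c * x ^ 2))
  have h2 : ∫ x : ℝ, (-x) ^ (2 * m + 1) * Real.exp (-c * (-x) ^ 2) =
      - ∫ x : ℝ, x ^ (2 * m + 1) * Real.exp (-c * x ^ 2) := by
    rw [← integral_neg]
    congr 1
    funext x
    rw [Odd.neg_pow ⟨m, by ring⟩, neg_sq]
    ring
  rw [h2] at h
  linarith

theorem integral_hermiteKdF2_gaussian (a b c : ℝ) (hc : 0 < c) (n : ℕ) :
    (∫ x : ℝ, hermiteKdF2 (2 * n) (a * x) b * Real.exp (-c * x ^ 2) =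
        (((2 * n).factorial : ℝ) / (n.factorial : ℝ)) * Real.sqrt (π / c) *
          (a ^ 2 / (4 * c) + b) ^ n) ∧
      ∫ x : ℝ, hermiteKdF2 (2 * n + 1) (a * x) b * Real.exp (-c * x ^ 2) = 0 := by
  constructor
  · have hdiv : 2 * n / 2 = n := by omega
    have heq : ∀ x : ℝ, hermiteKdF2 (2 * n) (a * x) b * Real.exp (-c * x ^ 2) =
        ∑ k ∈ Finset.range (n + 1),
          (((2 * n).factorial : ℝ) * a ^ (2 * (n - k)) * b ^ k /
            ((2 * (n - k)).factorial * k.factorial)) *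
            (x ^ (2 * (n - k)) * Real.exp (-c * x ^ 2)) := by
      intro x
      unfold hermiteKdF2
      rw [hdiv, Finset.mul_sum, Finset.sum_mul]
      refine Finset.sum_congr rfl fun k hk => ?_
      have hk' : k ≤ n := by simpa [Nat.lt_succ_iff] using hk
      have h2 : 2 * n - 2 * k = 2 * (n - k) := by omega
      rw [h2, mul_pow]
      ring
    calc ∫ x : ℝ, hermiteKdF2 (2 * n) (a * x) b * Real.exp (-c * x ^ 2)
        = ∫ x : ℝ, ∑ k ∈ Finset.range (n + 1),
            (((2 * n).factorial : ℝ) * a ^ (2 * (n - k)) * b ^ k /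
              ((2 * (n - k)).factorial * k.factorial)) *
              (x ^ (2 * (n - k)) * Real.exp (-c * x ^ 2)) := by
          simp_rw [heq]
      _ = ∑ k ∈ Finset.range (n + 1),
            (((2 * n).factorial : ℝ) * a ^ (2 * (n - k)) * b ^ k /
              ((2 * (n - k)).factorial * k.factorial)) *
              ∫ x : ℝ, x ^ (2 * (n - k)) * Real.exp (-c * x ^ 2) := by
          rw [integral_finset_sum _
            (fun k _ => (my_integrable_pow_gaussian hc _).const_mul _)]
          simp_rw [integral_const_mul]
      _ = (((2 * n).factorial : ℝ) / (n.factorial : ℝ)) * Real.sqrt (π / c) *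
            (a ^ 2 / (4 * c) + b) ^ n := by
          rw [show a ^ 2 / (4 * c) + b = b + a ^ 2 / (4 * c) from add_comm _ _, add_pow,
            Finset.mul_sum]
          refine Finset.sum_congr rfl fun k hk => ?_
          have hk' : k ≤ n := by simpa [Nat.lt_succ_iff] using hk
          rw [my_integral_even_moment hc, Nat.cast_choose ℝ hk']
          have h1 : ((2 * (n - k)).factorial : ℝ) ≠ 0 :=
            Nat.cast_ne_zero.mpr (Nat.factorial_ne_zero _)
          have h2 : (k.factorial : ℝ) ≠ 0 := Nat.cast_ne_zero.mpr (Nat.factorial_ne_zero _)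
          have h3 : ((n - k).factorial : ℝ) ≠ 0 := Nat.cast_ne_zero.mpr (Nat.factorial_ne_zero _)
          have h4 : (n.factorial : ℝ) ≠ 0 := Nat.cast_ne_zero.mpr (Nat.factorial_ne_zero _)
          have h5 : ((4 : ℝ) * c) ^ (n - k) ≠ 0 := pow_ne_zero _ (by positivity)
          rw [pow_mul, div_pow]
          field_simp
  · have hdiv : (2 * n + 1) / 2 = n := by omega
    have heq : ∀ x : ℝ, hermiteKdF2 (2 * n + 1) (a * x) b * Real.exp (-c * x ^ 2) =
        ∑ k ∈ Finset.range (n + 1),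
          (((2 * n + 1).factorial : ℝ) * a ^ (2 * (n - k) + 1) * b ^ k /
            ((2 * (n - k) + 1).factorial * k.factorial)) *
            (x ^ (2 * (n - k) + 1) * Real.exp (-c * x ^ 2)) := by
      intro x
      unfold hermiteKdF2
      rw [hdiv, Finset.mul_sum, Finset.sum_mul]
      refine Finset.sum_congr rfl fun k hk => ?_
      have hk' : k ≤ n := by simpa [Nat.lt_succ_iff] using hk
      have h2 : 2 * n + 1 - 2 * k = 2 * (n - k) + 1 := by omega
      rw [h2, mul_pow]
      ring
    calc ∫ x : ℝ, hermiteKdF2 (2 * n + 1) (a * x) b * Real.exp (-c * x ^ 2)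
        = ∫ x : ℝ, ∑ k ∈ Finset.range (n + 1),
            (((2 * n + 1).factorial : ℝ) * a ^ (2 * (n - k) + 1) * b ^ k /
              ((2 * (n - k) + 1).factorial * k.factorial)) *
              (x ^ (2 * (n - k) + 1) * Real.exp (-c * x ^ 2)) := by
          simp_rw [heq]
      _ = 0 := by
          rw [integral_finset_sum _
            (fun k _ => (my_integrable_pow_gaussian hc _).const_mul _)]
          simp_rw [integral_const_mul, my_integral_odd_moment, mul_zero, Finset.sum_const_zero]
end
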